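/- arXiv:2006.12142 — 6 statements merged into one kernel-verified Lean document; each statement's English description precedes it below -/
import Mathlib

section
/- Parametric basic lemma. Let (P,d) and (X,d) be metric spaces, let (p̄,x̄) ∈ P×X, and let ν: P×X → [0,+∞] be a function such that: (i) X is metrically complete; (ii) ν(p̄,x̄) = 0; (iii) the function p ↦ ν(p,x̄) is upper semicontinuous at p̄; (iv) there exists δ₁ > 0 such that for every p ∈ B(p̄,δ₁) the function x ↦ ν(p,x) is lower semicontinuous on X; (v) there exists δ₂ > 0 such that σ = inf{ |∇ₓν|(p,x) : (p,x) ∈ B(p̄,δ₂)×B(x̄,δ₂), ν(p,x) > 0 } > 0. Then there exist η > 0 and ζ > 0 such that: (t) {x ∈ X : ν(p,x) = 0} ∩ B(x̄,η) ≠ ∅ for every p ∈ B(p̄,ζ); and (tt) dist(x, {z ∈ X : ν(p,z) = 0}) ≤ ν(p,x)/σ for every (p,x) ∈ B(p̄,ζ)×B(x̄,η). -/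
/-!
Ekeland's variational principle, applied to `ν p` with a slope `ε < σ`, yields a point `y`
within `ν p x / ε` of `x` at which the slope of `ν p` is at most `ε`; as long as `y` stays in
the ball where `σ` bounds the slopes of `ν` at its non-zeros, `y` must be a zero of `ν p`.
Upper semicontinuity at `pbar` makes `ν p xbar` small for `p` near `pbar`, which keeps `y` in
that ball and gives the first claim; letting `ε` increase to `σ` gives the error bound.
-/

open Classical Metric Filter Set
open scoped ENNReal Topology

/-- Partial strong slope with respect to `x` of a function `ν : P × X → [0,∞]`:
`0` if `(p0,x0)` is a local minimizer of `ν`, otherwise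
`limsup_{x → x0} (ν(p0,x0) − ν(p0,x)) / d(x,x0)`. -/
noncomputable def slopeX {P X : Type*} [PseudoMetricSpace P] [PseudoMetricSpace X]
    (ν : P → X → ℝ≥0∞) (p0 : P) (x0 : X) : ℝ≥0∞ :=
  if IsLocalMin (fun q : P × X => ν q.1 q.2) (p0, x0) then 0
  else Filter.limsup (fun x => (ν p0 x0 - ν p0 x) / edist x x0) (𝓝[≠] x0)

lemma exists_mem_forall_le_add {α : Type*} (f : α → ℝ≥0∞) {s : Set α} (hs : s.Nonempty)
    {δ : ℝ≥0∞} (hδ : δ ≠ 0) : ∃ x ∈ s, ∀ z ∈ s, f x ≤ f z + δ := by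
  by_cases htop : ⨅ z ∈ s, f z = ⊤
  · obtain ⟨x, hx⟩ := hs
    exact ⟨x, hx, fun z hz => by simp [iInf₂_eq_top.1 htop z hz]⟩
  · obtain ⟨x, hx, hlt⟩ : ∃ x ∈ s, f x < (⨅ z ∈ s, f z) + δ := by
      simpa only [iInf_lt_iff, exists_prop] using ENNReal.lt_add_right htop hδ
    exact ⟨x, hx, fun z hz => hlt.le.trans (add_le_add_left (iInf₂_le z hz) δ)⟩

section Ekeland

variable {X : Type*} [EMetricSpace X] {f : X → ℝ≥0∞} {ε : ℝ≥0∞}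

def ekelandSet (f : X → ℝ≥0∞) (ε : ℝ≥0∞) (x : X) : Set X :=
  {z | f z + ε * edist z x ≤ f x}

lemma mem_ekelandSet_self (x : X) : x ∈ ekelandSet f ε x := by
  simp [ekelandSet]

lemma le_of_mem_ekelandSet {x z : X} (hz : z ∈ ekelandSet f ε x) : f z ≤ f x :=
  le_self_add.trans hz

lemma ekelandSet_subset {x y : X} (hy : y ∈ ekelandSet f ε x) :
    ekelandSet f ε y ⊆ ekelandSet f ε x := fun z hz =>
  calc f z + ε * edist z x ≤ f z + ε * edist z y + ε * edist y x := by
        rw [add_assoc, ← mul_add]; gcongr; exact edist_triangle _ _ _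
    _ ≤ f y + ε * edist y x := by gcongr; exact hz
    _ ≤ f x := hy

lemma LowerSemicontinuous.isClosed_ekelandSet (hf : LowerSemicontinuous f) (hε : ε ≠ ⊤)
    (x : X) : IsClosed (ekelandSet f ε x) :=
  (hf.add ((ENNReal.continuous_const_mul hε).comp
    (continuous_id.edist continuous_const)).lowerSemicontinuous).isClosed_preimage (f x)

lemma exists_seq_ekelandSet (f : X → ℝ≥0∞) (ε : ℝ≥0∞) (x₀ : X) {δ : ℕ → ℝ≥0∞}
    (hδ : ∀ n, δ n ≠ 0) :
    ∃ u : ℕ → X, u 0 = x₀ ∧ ∀ n, u (n + 1) ∈ ekelandSet f ε (u n) ∧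
      ∀ z ∈ ekelandSet f ε (u n), f (u (n + 1)) ≤ f z + δ n := by
  choose g hg using fun (x : X) (n : ℕ) =>
    exists_mem_forall_le_add f ⟨x, mem_ekelandSet_self (f := f) (ε := ε) x⟩ (hδ n)
  exact ⟨fun n => Nat.rec x₀ (fun k x => g x k) n, rfl, fun n => hg _ n⟩

lemma mul_edist_le_of_mem_ekelandSet {x x' z : X} {δ : ℝ≥0∞} (hx' : x' ∈ ekelandSet f ε x)
    (hmin : ∀ z ∈ ekelandSet f ε x, f x' ≤ f z + δ) (hfin : f x' ≠ ⊤)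
    (hz : z ∈ ekelandSet f ε x') : ε * edist z x' ≤ δ :=
  ENNReal.le_of_add_le_add_left ((le_of_mem_ekelandSet hz).trans_lt hfin.lt_top).ne
    (hz.trans (hmin z (ekelandSet_subset hx' hz)))

lemma LowerSemicontinuous.exists_mem_ekelandSet_forall_eq [CompleteSpace X]
    (hf : LowerSemicontinuous f) (hε0 : ε ≠ 0) (hε : ε ≠ ⊤) {x₀ : X} (hx₀ : f x₀ ≠ ⊤) :
    ∃ y ∈ ekelandSet f ε x₀, ∀ z ∈ ekelandSet f ε y, z = y := by
  obtain ⟨u, rfl, hu⟩ := exists_seq_ekelandSet f ε x₀ (δ := fun n => ε / 2 ^ n)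
    fun n => ENNReal.div_ne_zero.2 ⟨hε0, ENNReal.pow_ne_top ENNReal.ofNat_ne_top⟩
  have hanti : Antitone fun n => ekelandSet f ε (u n) :=
    antitone_nat_of_succ_le fun n => ekelandSet_subset (hu n).1
  have hfin : ∀ n, f (u n) ≠ ⊤ := fun n =>
    ((le_of_mem_ekelandSet (hanti n.zero_le (mem_ekelandSet_self _))).trans_lt hx₀.lt_top).ne
  -- `u (n + 1)` almost minimizes `f` on `ekelandSet f ε (u n)`, so the nested sets shrink.
  have hsmall : ∀ n, ∀ z ∈ ekelandSet f ε (u (n + 1)), edist z (u (n + 1)) ≤ 1 / 2 ^ n := by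
    intro n z hz
    have h := mul_edist_le_of_mem_ekelandSet (hu n).1 (hu n).2 (hfin _) hz
    rwa [div_eq_mul_inv, ENNReal.mul_le_mul_iff_right hε0 hε, ← one_div] at h
  obtain ⟨y, hy⟩ := cauchySeq_tendsto_of_complete <|
    cauchySeq_of_edist_le_geometric_two (f := fun n => u (n + 1)) 1 ENNReal.one_ne_top
      fun n => by rw [edist_comm]; exact hsmall n _ (hu (n + 1)).1
  have hyS : ∀ n, y ∈ ekelandSet f ε (u n) := fun n =>
    (hf.isClosed_ekelandSet hε _).mem_of_tendsto hy <| eventually_atTop.2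
      ⟨n, fun m hm => hanti (hm.trans m.le_succ) (mem_ekelandSet_self _)⟩
  have hgeom : Tendsto (fun n : ℕ => (1 : ℝ≥0∞) / 2 ^ n) atTop (𝓝 0) := by
    simpa only [one_div, ENNReal.inv_pow] using
      ENNReal.tendsto_pow_atTop_nhds_zero_of_lt_one (ENNReal.inv_lt_one.2 ENNReal.one_lt_two)
  refine ⟨y, hyS 0, fun z hz => tendsto_nhds_unique ?_ hy⟩
  refine tendsto_iff_edist_tendsto_0.2 <| tendsto_of_tendsto_of_tendsto_of_le_of_le
    tendsto_const_nhds hgeom (fun _ => zero_le) fun n => ?_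
  rw [edist_comm]
  exact hsmall n z (ekelandSet_subset (hyS (n + 1)) hz)

theorem LowerSemicontinuous.ekeland [CompleteSpace X] (hf : LowerSemicontinuous f)
    (hε0 : ε ≠ 0) (hε : ε ≠ ⊤) {x₀ : X} (hx₀ : f x₀ ≠ ⊤) :
    ∃ y, edist y x₀ ≤ f x₀ / ε ∧ ∀ z, f y ≤ f z + ε * edist z y := by
  obtain ⟨y, hy₀, hy⟩ := hf.exists_mem_ekelandSet_forall_eq hε0 hε hx₀
  refine ⟨y, ?_, fun z => ?_⟩
  · rw [ENNReal.le_div_iff_mul_le (Or.inl hε0) (Or.inl hε), mul_comm]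
    exact le_add_self.trans hy₀
  · by_cases hz : z ∈ ekelandSet f ε y
    · simp [hy z hz]
    · exact (not_le.1 hz).le

end Ekeland

section Slope

variable {P X : Type*} [PseudoMetricSpace P] [PseudoMetricSpace X] {ν : P → X → ℝ≥0∞} {p : P}
  {x : X}

lemma slopeX_le_of_forall_le_add_mul_edist {σ : ℝ≥0∞}
    (h : ∀ z, ν p x ≤ ν p z + σ * edist z x) : slopeX ν p x ≤ σ := by
  unfold slopeX
  split_ifs
  · exact zero_le
  · refine limsup_le_of_le (by isBoundedDefault) (Eventually.of_forall fun z => ?_)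
    exact ENNReal.div_le_of_le_mul (tsub_le_iff_left.2 (h z))

lemma slopeX_eq_zero_of_eventually_eq_top (h : ∀ᶠ z in 𝓝 x, ν p z = ⊤) : slopeX ν p x = 0 := by
  unfold slopeX
  split_ifs
  · rfl
  · refine nonpos_iff_eq_zero.1 (limsup_le_of_le (by isBoundedDefault) ?_)
    filter_upwards [eventually_nhdsWithin_of_eventually_nhds h] with z hz
    simp [hz, h.self_of_nhds]

end Slope

lemma closedEBall_infEDist_subset_closedEBall {X : Type*} [PseudoEMetricSpace X] {s : Set X}
    {x y c : X} {r : ℝ≥0∞} (hy : y ∈ s) (hxc : edist x c ≤ r) (hcy : edist c y ≤ r) :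
    closedEBall x (infEDist x s) ⊆ closedEBall c (3 * r) := fun z hz =>
  calc edist z c ≤ edist z x + edist x c := edist_triangle _ _ _
    _ ≤ edist x c + edist c y + edist x c := by
      gcongr
      exact hz.trans ((infEDist_le_edist_of_mem hy).trans (edist_triangle _ _ _))
    _ ≤ r + r + r := by gcongr
    _ = 3 * r := by ring

section ZeroSet

variable {P X : Type*} [PseudoMetricSpace P] [MetricSpace X] [CompleteSpace X]
  {ν : P → X → ℝ≥0∞} {p : P} {s : Set X} {σ : ℝ≥0∞}

lemma exists_zero_edist_le_of_lt_mul (hlsc : LowerSemicontinuous (ν p))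
    (hslope : ∀ y ∈ s, 0 < ν p y → σ ≤ slopeX ν p y) {x₀ : X} {r : ℝ≥0∞}
    (hball : closedEBall x₀ r ⊆ s) (hr : r ≠ ⊤) (hx₀ : ν p x₀ ≠ ⊤) (hlt : ν p x₀ < σ * r) :
    ∃ y, ν p y = 0 ∧ edist x₀ y ≤ r := by
  by_cases h0 : ν p x₀ = 0
  · exact ⟨x₀, h0, by simp⟩
  have hr0 : r ≠ 0 := by rintro rfl; simp at hlt
  -- Ekeland's principle with the slope `ν p x₀ / r < σ` lands within `r` of `x₀`.
  obtain ⟨y, hyx₀, hymin⟩ := hlsc.ekeland (ENNReal.div_ne_zero.2 ⟨h0, hr⟩)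
    (ENNReal.div_ne_top hx₀ hr0) hx₀
  rw [ENNReal.div_div_cancel h0 hx₀] at hyx₀
  refine ⟨y, ?_, by rwa [edist_comm]⟩
  by_contra hy0
  exact ((ENNReal.div_lt_of_lt_mul hlt).trans_le
    (hslope y (hball hyx₀) (pos_iff_ne_zero.2 hy0))).not_ge
    (slopeX_le_of_forall_le_add_mul_edist hymin)

lemma exists_zero_edist_le_of_div_lt (hlsc : LowerSemicontinuous (ν p))
    (hslope : ∀ y ∈ s, 0 < ν p y → σ ≤ slopeX ν p y) {x₀ : X} {r : ℝ≥0∞}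
    (hball : closedEBall x₀ r ⊆ s) (hr : r ≠ ⊤) (hlt : ν p x₀ / σ < r) :
    ∃ y, ν p y = 0 ∧ edist x₀ y ≤ r := by
  have hr0 : r ≠ 0 := (zero_le.trans_lt hlt).ne'
  by_cases hx₀ : ν p x₀ = ⊤
  · -- `⊤ / σ < r` forces `σ = ⊤`, and then points of finite value accumulate at `x₀`.
    have hσ : σ = ⊤ := by
      by_contra hσ
      rw [hx₀, ENNReal.top_div_of_ne_top hσ] at hlt
      exact not_top_lt hlt
    have hfreq : ∃ᶠ z in 𝓝 x₀, ν p z ≠ ⊤ := fun h => by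
      have := hslope x₀ (hball mem_closedEBall_self) (by simp [hx₀])
      rw [hσ, slopeX_eq_zero_of_eventually_eq_top (by simpa using h)] at this
      exact ENNReal.top_ne_zero (le_zero_iff.1 this)
    obtain ⟨x', hx', hx'x₀⟩ :=
      (hfreq.and_eventually (eball_mem_nhds x₀ (ENNReal.half_pos hr0))).exists
    have hx'ball : closedEBall x' (r / 2) ⊆ closedEBall x₀ r := fun z hz =>
      calc edist z x₀ ≤ edist z x' + edist x' x₀ := edist_triangle _ _ _
        _ ≤ r / 2 + r / 2 := add_le_add hz hx'x₀.le
        _ = r := ENNReal.add_halves r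
    obtain ⟨y, hy0, hx'y⟩ := exists_zero_edist_le_of_lt_mul hlsc hslope
      (hx'ball.trans hball) (ENNReal.div_ne_top hr two_ne_zero) hx'
      (by rw [hσ, ENNReal.top_mul (ENNReal.half_pos hr0).ne']; exact hx'.lt_top)
    refine ⟨y, hy0, ?_⟩
    calc edist x₀ y ≤ edist x₀ x' + edist x' y := edist_triangle _ _ _
      _ ≤ r / 2 + r / 2 := add_le_add (by rw [edist_comm]; exact hx'x₀.le) hx'y
      _ = r := ENNReal.add_halves r
  · rcases eq_or_ne (ν p x₀) 0 with h0 | h0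
    · exact ⟨x₀, h0, by simp⟩
    rw [ENNReal.div_lt_iff (Or.inr h0) (Or.inr hx₀), mul_comm] at hlt
    exact exists_zero_edist_le_of_lt_mul hlsc hslope hball hr hx₀ hlt

lemma infEDist_zeroSet_le_div (hlsc : LowerSemicontinuous (ν p))
    (hslope : ∀ y ∈ s, 0 < ν p y → σ ≤ slopeX ν p y) {x : X}
    (hball : closedEBall x (infEDist x {z | ν p z = 0}) ⊆ s) :
    infEDist x {z | ν p z = 0} ≤ ν p x / σ := by
  refine le_of_forall_gt_imp_ge_of_dense fun r hr => ?_
  by_contra! hlt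
  obtain ⟨y, hy0, hxy⟩ := exists_zero_edist_le_of_div_lt hlsc hslope
    ((closedEBall_subset_closedEBall hlt.le).trans hball) hlt.ne_top hr
  exact hlt.not_ge ((infEDist_le_edist_of_mem (x := x) hy0).trans hxy)

end ZeroSet

/-- **Parametric basic lemma.** -/
theorem parametric_basic_lemma
    {P X : Type*} [MetricSpace P] [MetricSpace X] [CompleteSpace X]
    (ν : P → X → ℝ≥0∞) (pbar : P) (xbar : X)
    (h2 : ν pbar xbar = 0)
    (h3 : UpperSemicontinuousAt (fun p => ν p xbar) pbar)
    (h4 : ∃ δ₁ > (0:ℝ), ∀ p ∈ closedBall pbar δ₁, LowerSemicontinuous (fun x => ν p x))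
    (δ₂ : ℝ) (hδ₂ : 0 < δ₂) (σ : ℝ≥0∞)
    (hσdef : σ = ⨅ q : {q : P × X // q.1 ∈ closedBall pbar δ₂ ∧ q.2 ∈ closedBall xbar δ₂ ∧
        0 < ν q.1 q.2}, slopeX ν q.val.1 q.val.2)
    (hσpos : 0 < σ) :
    ∃ η > (0:ℝ), ∃ ζ > (0:ℝ),
      (∀ p ∈ closedBall pbar ζ, ({x : X | ν p x = 0} ∩ closedBall xbar η).Nonempty) ∧
      (∀ p ∈ closedBall pbar ζ, ∀ x ∈ closedBall xbar η,
        EMetric.infEdist x {z : X | ν p z = 0} ≤ ν p x / σ) := by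
  obtain ⟨δ₁, hδ₁, hlsc⟩ := h4
  obtain ⟨η, hη, hδ₂η⟩ : ∃ η > (0:ℝ), δ₂ = 3 * η := ⟨δ₂ / 3, by positivity, by ring⟩
  have hslope : ∀ p ∈ closedBall pbar δ₂, ∀ y ∈ closedEBall xbar (3 * .ofReal η),
      0 < ν p y → σ ≤ slopeX ν p y := fun p hp y hy hy0 => by
    rw [← ENNReal.ofReal_ofNat 3, ← ENNReal.ofReal_mul (by norm_num), ← hδ₂η,
      closedEBall_ofReal hδ₂.le] at hy
    exact hσdef ▸ iInf_le_of_le ⟨(p, y), hp, hy, hy0⟩ le_rfl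
  obtain ⟨ζ, hζ, hnear⟩ : ∃ ζ > 0, ∀ p ∈ closedBall pbar ζ, ν p xbar < .ofReal η * σ ∧
      p ∈ closedBall pbar δ₁ ∧ p ∈ closedBall pbar δ₂ :=
    nhds_basis_closedBall.eventually_iff.1 <|
      (h3 _ (show ν pbar xbar < _ from
        h2 ▸ ENNReal.mul_pos (ENNReal.ofReal_pos.2 hη).ne' hσpos.ne')).and <|
        Eventually.and (closedBall_mem_nhds _ hδ₁) (closedBall_mem_nhds _ hδ₂)
  have hzero : ∀ p ∈ closedBall pbar ζ, ∃ y, ν p y = 0 ∧ edist xbar y ≤ .ofReal η :=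
    fun p hp => have ⟨hν, hp₁, hp₂⟩ := hnear p hp
    exists_zero_edist_le_of_div_lt (hlsc p hp₁) (hslope p hp₂)
      (closedEBall_subset_closedEBall (le_mul_of_one_le_left zero_le (by norm_num)))
      ENNReal.ofReal_ne_top (ENNReal.div_lt_of_lt_mul hν)
  refine ⟨η, hη, ζ, hζ, fun p hp => ?_, fun p hp x hx => ?_⟩
  · obtain ⟨y, hy0, hy⟩ := hzero p hp
    exact ⟨y, hy0, by rwa [mem_closedBall', ← edist_le_ofReal hη.le]⟩
  · obtain ⟨y, hy0, hy⟩ := hzero p hp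
    obtain ⟨-, hp₁, hp₂⟩ := hnear p hp
    exact infEDist_zeroSet_le_div (hlsc p hp₁) (hslope p hp₂)
      (closedEBall_infEDist_subset_closedEBall hy0 ((edist_le_ofReal hη.le).2 hx) hy)
end

section
/- Convexity of the solution mapping. Let P, X, Y be normed vector spaces, C ⊆ Y a closed convex cone, and F: P×X ⇉ Y a set-valued mapping that is C-concave on P×X. Then the solution mapping Solv: P ⇉ X, Solv(p) = {x ∈ X : F(p,x) ⊆ C}, is a convex set-valued mapping: t Solv(p1) + (1−t) Solv(p2) ⊆ Solv(t p1 + (1−t) p2) for all p1, p2 ∈ P and t ∈ [0,1]; equivalently, graph Solv is a convex subset of P×X. -/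
open Set
open scoped Pointwise

/-- **Convexity of the solution mapping.** If `F : P × X ⇉ Y` is `C`-concave,
with `C ⊆ Y` a closed convex cone, then `Solv(p) = {x : F(p,x) ⊆ C}` is a convex
set-valued mapping: `t • Solv p₁ + (1−t) • Solv p₂ ⊆ Solv (t • p₁ + (1−t) • p₂)`
and `graph Solv` is convex. -/
theorem convexity_of_Solv
    {P X Y : Type*} [NormedAddCommGroup P] [NormedSpace ℝ P]
    [NormedAddCommGroup X] [NormedSpace ℝ X]
    [NormedAddCommGroup Y] [NormedSpace ℝ Y]
    (C : Set Y) (hCclosed : IsClosed C) (hCconv : Convex ℝ C)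
    (hCcone : ∀ t : ℝ, 0 < t → ∀ y ∈ C, t • y ∈ C)
    (F : P → X → Set Y)
    (hFconc : ∀ w₁ w₂ : P × X, ∀ t ∈ Icc (0:ℝ) 1,
      F (t • w₁ + (1 - t) • w₂).1 (t • w₁ + (1 - t) • w₂).2 ⊆
        t • F w₁.1 w₁.2 + (1 - t) • F w₂.1 w₂.2 + C) :
    (∀ p₁ p₂ : P, ∀ t ∈ Icc (0:ℝ) 1,
      t • {x : X | F p₁ x ⊆ C} + (1 - t) • {x : X | F p₂ x ⊆ C} ⊆
        {x : X | F (t • p₁ + (1 - t) • p₂) x ⊆ C}) ∧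
    Convex ℝ {q : P × X | F q.1 q.2 ⊆ C} := by
  -- C is closed under addition
  have hadd : ∀ u ∈ C, ∀ v ∈ C, u + v ∈ C := by
    intro u hu v hv
    have hmid : (1/2 : ℝ) • u + (1/2 : ℝ) • v ∈ C := by
      have := hCconv hu hv (by norm_num : (0:ℝ) ≤ 1/2) (by norm_num : (0:ℝ) ≤ 1/2)
        (by norm_num)
      exact this
    have := hCcone 2 (by norm_num) _ hmid
    have h2 : (2:ℝ) • ((1/2 : ℝ) • u + (1/2 : ℝ) • v) = u + v := by
      rw [smul_add, smul_smul, smul_smul]; norm_num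
    rwa [h2] at this
  -- key step
  have key : ∀ (p₁ p₂ : P) (x₁ x₂ : X), ∀ t ∈ Icc (0:ℝ) 1,
      F p₁ x₁ ⊆ C → F p₂ x₂ ⊆ C →
      F (t • p₁ + (1 - t) • p₂) (t • x₁ + (1 - t) • x₂) ⊆ C := by
    intro p₁ p₂ x₁ x₂ t ht h₁ h₂
    intro y hy
    have := hFconc (p₁, x₁) (p₂, x₂) t ht
    have hy' : y ∈ t • F p₁ x₁ + (1 - t) • F p₂ x₂ + C := by
      apply this
      simpa using hy
    obtain ⟨z, hz, c, hc, rfl⟩ := hy'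
    obtain ⟨a, ha, b, hb, rfl⟩ := hz
    obtain ⟨a', ha', rfl⟩ := ha
    obtain ⟨b', hb', rfl⟩ := hb
    exact hadd _ (hCconv (h₁ ha') (h₂ hb') ht.1 (by linarith [ht.2]) (by ring)) _ hc
  constructor
  · intro p₁ p₂ t ht x hx
    obtain ⟨a, ha, b, hb, rfl⟩ := hx
    obtain ⟨x₁, hx₁, rfl⟩ := ha
    obtain ⟨x₂, hx₂, rfl⟩ := hb
    exact key p₁ p₂ x₁ x₂ t ht hx₁ hx₂
  · intro q₁ hq₁ q₂ hq₂ s r hs hr hsr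
    have ht : s ∈ Icc (0:ℝ) 1 := ⟨hs, by linarith⟩
    have hrr : r = 1 - s := by linarith
    subst hrr
    exact key q₁.1 q₂.1 q₁.2 q₂.2 s ht hq₁ hq₂
end

section
/- Outer approximation of the graphical derivative. Let P and Y be normed vector spaces, X a Banach space, P×X with the max-norm, C ⊆ Y a closed convex cone, F: P×X ⇉ Y with nonempty values, and (p̄,x̄) ∈ P×X with x̄ ∈ Solv(p̄). Suppose that F admits an inner prederivative H_F((p̄,x̄);·): P×X ⇉ Y at (p̄,x̄) which, as a set-valued mapping of (q,w), is l.s.c. on P×X. Then for every p ∈ P, DSolv(p̄,x̄)(p) ⊆ ⋂_{y ∈ F(p̄,x̄)} {v ∈ X : H_F((p̄,x̄);(p,v)) ⊆ T_C(y)}, where T_C(y) = cl[cone(C − y)] is the contingent cone to the convex set C at y. -/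
open Classical Metric Filter Set
open scoped ENNReal Topology Pointwise

/-- A set-valued mapping `Φ` is l.s.c. at `w0`. -/
def SVLscAt {X Y : Type*} [PseudoMetricSpace X] [TopologicalSpace Y]
    (Φ : X → Set Y) (x0 : X) : Prop :=
  ∀ V : Set Y, IsOpen V → (Φ x0 ∩ V).Nonempty →
    ∃ δ > (0:ℝ), ∀ x ∈ closedBall x0 δ, (Φ x ∩ V).Nonempty

/-- `H` is a (positively homogeneous) inner prederivative of `Φ` at `w0`. -/
def IsInnerPrederivAt {E Y : Type*} [NormedAddCommGroup E] [NormedSpace ℝ E]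
    [NormedAddCommGroup Y] [NormedSpace ℝ Y]
    (Φ : E → Set Y) (H : E → Set Y) (w0 : E) : Prop :=
  (∀ t : ℝ, 0 < t → ∀ u : E, H (t • u) = t • H u) ∧
  ∀ ε > (0:ℝ), ∃ δ > (0:ℝ), ∀ w ∈ closedBall w0 δ,
    Φ w0 + H (w - w0) ⊆ Φ w + (ε * ‖w - w0‖) • closedBall (0:Y) 1

/-- Contingent (Bouligand tangent) cone to `S` at `w`. -/
def contingentCone {E : Type*} [SeminormedAddCommGroup E] [NormedSpace ℝ E]
    (S : Set E) (w : E) : Set E :=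
  {v | ∃ (t : ℕ → ℝ) (vn : ℕ → E), (∀ n, 0 < t n) ∧ Tendsto t atTop (𝓝 0) ∧
    Tendsto vn atTop (𝓝 v) ∧ ∀ n, w + t n • vn n ∈ S}

/-!
Take `tₙ ↓ 0` and `dₙ → (p, v)` with `(p̄, x̄) + tₙ dₙ ∈ Solv`. Given `y ∈ F(p̄, x̄)` and
`u ∈ H(p, v)`, lower semicontinuity of `H` at `(p, v)` gives `uₙ ∈ H(dₙ)` close to `u`, and the
inner prederivative gives `zₙ ∈ F((p̄, x̄) + tₙ dₙ) ⊆ C` whose difference quotient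
`tₙ⁻¹ (zₙ - y) ∈ cone (C - y)` is within `ε ‖dₙ‖` of `uₙ`. Hence `u ∈ cl cone (C - y)`.
-/

theorem exists_smul_mem_of_mem_contingentCone {E : Type*} [SeminormedAddCommGroup E]
    [NormedSpace ℝ E]
    {S : Set E} {w v : E} (hv : v ∈ contingentCone S w) {ρ δ : ℝ} (hρ : 0 < ρ) (hδ : 0 < δ) :
    ∃ t > 0, t ≤ δ ∧ ∃ d ∈ ball v ρ, w + t • d ∈ S := by
  obtain ⟨t, d, htpos, ht0, hd, hmem⟩ := hv
  obtain ⟨n, htn, hdn⟩ :=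
    ((ht0.eventually (ge_mem_nhds hδ)).and (hd.eventually (ball_mem_nhds v hρ))).exists
  exact ⟨t n, htpos n, htn, d n, hdn, hmem n⟩

theorem IsInnerPrederivAt.exists_difference_quotient_near {E Y : Type*} [NormedAddCommGroup E]
    [NormedSpace ℝ E] [NormedAddCommGroup Y] [NormedSpace ℝ Y]
    {Φ H : E → Set Y} {w0 : E} (hH : IsInnerPrederivAt Φ H w0) {ε : ℝ} (hε : 0 < ε) :
    ∃ δ > 0, ∀ t > 0, ∀ d : E, t * ‖d‖ ≤ δ → ∀ y ∈ Φ w0, ∀ u ∈ H d,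
      ∃ z ∈ Φ (w0 + t • d), ‖u - t⁻¹ • (z - y)‖ ≤ ε * ‖d‖ := by
  obtain ⟨δ, hδpos, hδ⟩ := hH.2 ε hε
  refine ⟨δ, hδpos, fun t ht d htd y hy u hu => ?_⟩
  have hstep : w0 + t • d - w0 = t • d := add_sub_cancel_left _ _
  have hnorm : ‖t • d‖ = t * ‖d‖ := by rw [norm_smul, Real.norm_of_nonneg ht.le]
  have hball : w0 + t • d ∈ closedBall w0 δ := by
    rwa [mem_closedBall, dist_eq_norm, hstep, hnorm]
  have hpred : y + t • u ∈ Φ (w0 + t • d) + (ε * ‖w0 + t • d - w0‖) • closedBall (0 : Y) 1 :=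
    hδ _ hball (add_mem_add hy (by rw [hstep, hH.1 t ht]; exact smul_mem_smul_set hu))
  rw [hstep, hnorm, smul_unitClosedBall] at hpred
  obtain ⟨z, hz, b, hb, hyu : z + b = y + t • u⟩ := hpred
  refine ⟨z, hz, ?_⟩
  have hdiff : u - t⁻¹ • (z - y) = t⁻¹ • b := by
    have hzy : z - y = t • u - b := by rw [sub_eq_sub_iff_add_eq_add, hyu, add_comm]
    rw [hzy, smul_sub, inv_smul_smul₀ ht.ne']
    abel
  rw [hdiff, norm_smul, Real.norm_of_nonneg (inv_nonneg.2 ht.le)]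
  rw [mem_closedBall_zero_iff, Real.norm_of_nonneg (by positivity)] at hb
  calc t⁻¹ * ‖b‖ ≤ t⁻¹ * (ε * (t * ‖d‖)) := by gcongr
    _ = ε * ‖d‖ := by field_simp

theorem IsInnerPrederivAt.subset_closure_cone_sub_of_mem_contingentCone {E Y : Type*}
    [NormedAddCommGroup E] [NormedSpace ℝ E] [NormedAddCommGroup Y] [NormedSpace ℝ Y]
    {Φ H : E → Set Y} {w0 d : E} {C : Set Y} (hH : IsInnerPrederivAt Φ H w0)
    (hlsc : SVLscAt H d) (hd : d ∈ contingentCone {w | Φ w ⊆ C} w0) {y : Y} (hy : y ∈ Φ w0) :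
    H d ⊆ closure {v | ∃ t : ℝ, 0 < t ∧ ∃ c ∈ C, v = t • (c - y)} := by
  intro u hu
  rw [Metric.mem_closure_iff]
  intro ε hε
  set M := ‖d‖ + 1
  have hM : 0 < M := by positivity
  obtain ⟨δ, hδ, happrox⟩ := hH.exists_difference_quotient_near (ε := ε / (2 * M)) (by positivity)
  obtain ⟨ρ, hρ, hnear⟩ := hlsc (ball u (ε / 2)) isOpen_ball ⟨u, hu, mem_ball_self (half_pos hε)⟩
  obtain ⟨t, ht, htδ, d', hd', hmem⟩ :=
    exists_smul_mem_of_mem_contingentCone hd (lt_min hρ one_pos) (div_pos hδ hM)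
  have hd'M : ‖d'‖ ≤ M :=
    norm_le_of_mem_closedBall (ball_subset_closedBall (ball_subset_ball (min_le_right _ _) hd'))
  obtain ⟨u', hu', hu'u⟩ :=
    hnear d' (ball_subset_closedBall (ball_subset_ball (min_le_left _ _) hd'))
  have htd' : t * ‖d'‖ ≤ δ := calc
    t * ‖d'‖ ≤ δ / M * M := by gcongr
    _ = δ := div_mul_cancel₀ δ hM.ne'
  obtain ⟨z, hz, hzu⟩ := happrox t ht d' htd' y hy u' hu'
  refine ⟨t⁻¹ • (z - y), ⟨t⁻¹, inv_pos.2 ht, z, hmem hz, rfl⟩, ?_⟩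
  have hcone : dist u' (t⁻¹ • (z - y)) ≤ ε / 2 := calc
    dist u' (t⁻¹ • (z - y)) ≤ ε / (2 * M) * ‖d'‖ := by rwa [dist_eq_norm]
    _ ≤ ε / (2 * M) * M := by gcongr
    _ = ε / 2 := by field_simp
  calc dist u (t⁻¹ • (z - y)) ≤ dist u u' + dist u' (t⁻¹ • (z - y)) := dist_triangle _ _ _
    _ < ε / 2 + ε / 2 := add_lt_add_of_lt_of_le (mem_ball'.1 hu'u) hcone
    _ = ε := add_halves ε

theorem outer_approximation_of_graphical_derivative_general
    {P X Y : Type*} [NormedAddCommGroup P] [NormedSpace ℝ P]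
    [NormedAddCommGroup X] [NormedSpace ℝ X]
    [NormedAddCommGroup Y] [NormedSpace ℝ Y]
    (C : Set Y)
    (F : P → X → Set Y)
    (pbar : P) (xbar : X)
    (HF : P × X → Set Y)
    (hHF : IsInnerPrederivAt (fun q : P × X => F q.1 q.2) HF (pbar, xbar))
    (hHFlsc : ∀ w : P × X, SVLscAt HF w) :
    ∀ p : P,
      {v : X | ((p, v) : P × X) ∈ contingentCone {q : P × X | F q.1 q.2 ⊆ C} (pbar, xbar)} ⊆
      ⋂ y ∈ F pbar xbar,
        {v : X | HF (p, v) ⊆ closure {w : Y | ∃ t : ℝ, 0 < t ∧ ∃ c ∈ C, w = t • (c - y)}} :=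
  fun _ _ hv => mem_iInter₂.2 fun _ hy =>
    hHF.subset_closure_cone_sub_of_mem_contingentCone (hHFlsc _) hv hy

/-- **Outer approximation of the graphical derivative of the solution mapping.**
For the convex set `C`, `T_C(y) = cl[cone(C − y)]`. `P × X` carries the max-norm
(the product norm). -/
theorem outer_approximation_of_graphical_derivative
    {P X Y : Type*} [NormedAddCommGroup P] [NormedSpace ℝ P]
    [NormedAddCommGroup X] [NormedSpace ℝ X] [CompleteSpace X]
    [NormedAddCommGroup Y] [NormedSpace ℝ Y]
    (C : Set Y) (hCclosed : IsClosed C) (hCconv : Convex ℝ C)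
    (hCcone : ∀ t : ℝ, 0 < t → ∀ y ∈ C, t • y ∈ C)
    (F : P → X → Set Y) (hFne : ∀ p x, (F p x).Nonempty)
    (pbar : P) (xbar : X)
    (hsol : F pbar xbar ⊆ C)
    (HF : P × X → Set Y)
    (hHF : IsInnerPrederivAt (fun q : P × X => F q.1 q.2) HF (pbar, xbar))
    (hHFlsc : ∀ w : P × X, SVLscAt HF w) :
    ∀ p : P,
      {v : X | ((p, v) : P × X) ∈ contingentCone {q : P × X | F q.1 q.2 ⊆ C} (pbar, xbar)} ⊆
      ⋂ y ∈ F pbar xbar,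
        {v : X | HF (p, v) ⊆ closure {w : Y | ∃ t : ℝ, 0 < t ∧ ∃ c ∈ C, w = t • (c - y)}} :=
  outer_approximation_of_graphical_derivative_general C F pbar xbar HF hHF hHFlsc
end

section
/- Coderivative of the solution mapping via the merit function. Let P and Y be normed vector spaces, X a Banach space, P×X with the max-norm ‖(p,x)‖ = max{‖p‖,‖x‖}, C ⊆ Y a closed convex cone with nonempty interior, F: P×X ⇉ Y with nonempty values, and (p̄,x̄) ∈ P×X. Suppose: (i) x̄ ∈ Solv(p̄); (ii) p ↦ ν_{F,C}(p,x̄) is upper semicontinuous at p̄; (iii) there exists δ₁ > 0 such that for every p ∈ B(p̄,δ₁) the mapping x ↦ F(p,x) is l.s.c. on X; (iv) there exists δ₂ > 0 such that, for every p ∈ B(p̄,δ₂), x ↦ F(p,x) admits an outer prederivative H_{F(p,·)}(x;·) at each x ∈ B(x̄,δ₂), and σ_H(p̄,x̄) = inf{ sup_{‖u‖=1} core(C, H_{F(p,·)}(x;u)) : (p,x) ∈ B(p̄,δ₂)×B(x̄,δ₂), F(p,x) ⊄ C } > 0. Then there exist ζ, η > 0 such that for every (p,x) ∈ [int B(p̄,ζ)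 × int B(x̄,η)] ∩ graph Solv and every x* ∈ X*, the Fréchet coderivative satisfies D*Solv(p,x)(x*) = {p* ∈ P* : (p*,−x*) ∈ cone ∂̂ν_{F,C}(p,x)}. -/
/-!
Near `(p̄, x̄)` the merit function satisfies the error bound `s · dist(x, Solv p) ≤ ν(p, x)` for
any `0 < s < σ_H`. Apply Ekeland's variational principle with constant `s` to `ν(p, ·)`: if the
resulting point `v` had `ν(p, v) > 0`, the outer prederivative would give a unit direction `u`
with `H(u) + r𝔹 ⊆ C` for some `r > s`, and as `C` is a convex cone a step `t u` lowers the
excess by about `t r`, contradicting the Ekeland inequality. Such an error bound turns Fréchet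
normals to `gph Solv = {ν = 0}` into positive multiples of Fréchet subgradients of `ν`;
conversely, since `ν ≥ 0` vanishes on `gph Solv`, subgradients of `ν` at a solution are normals.
-/

open Classical Metric Filter Set
open scoped ENNReal Topology Pointwise

/-- Excess of `A` over `C`: `e(A,C) = sup_{a ∈ A} dist(a,C)`. -/
noncomputable def exc {Y : Type*} [PseudoEMetricSpace Y] (A C : Set Y) : ℝ≥0∞ :=
  ⨆ y ∈ A, EMetric.infEdist y C

/-- `H` is a (positively homogeneous) outer prederivative of `Φ` at `x0`. -/
def IsOuterPrederivAt {X Y : Type*} [NormedAddCommGroup X] [NormedSpace ℝ X]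
    [NormedAddCommGroup Y] [NormedSpace ℝ Y]
    (Φ : X → Set Y) (H : X → Set Y) (x0 : X) : Prop :=
  (∀ t : ℝ, 0 < t → ∀ u : X, H (t • u) = t • H u) ∧
  ∀ ε > (0:ℝ), ∃ δ > (0:ℝ), ∀ x ∈ closedBall x0 δ,
    Φ x ⊆ Φ x0 + H (x - x0) + (ε * ‖x - x0‖) • closedBall (0:Y) 1

/-- `core(K,S) = sup{r > 0 : S + r𝔹 ⊆ K}`. -/
noncomputable def coreSet {Y : Type*} [NormedAddCommGroup Y] [NormedSpace ℝ Y]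
    (K S : Set Y) : ℝ≥0∞ :=
  ⨆ r ∈ {r : ℝ | 0 < r ∧ S + r • closedBall (0:Y) 1 ⊆ K}, ENNReal.ofReal r

/-- Fréchet normal cone to `S` at `w0`:
`{w* : limsup_{w → w0, w ∈ S} ⟨w*, w − w0⟩ / ‖w − w0‖ ≤ 0}`. -/
def FNormalCone {E : Type*} [NormedAddCommGroup E] [NormedSpace ℝ E]
    (S : Set E) (w0 : E) : Set (E →L[ℝ] ℝ) :=
  {ws | ∀ ε > (0:ℝ), ∀ᶠ w in nhdsWithin w0 S, ws (w - w0) ≤ ε * ‖w - w0‖}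

/-- Fréchet subdifferential of an extended-real-valued function `φ : E → [0,∞]` at `w0`:
`{w* : liminf_{w → w0} (φ w − φ w0 − ⟨w*, w − w0⟩)/‖w − w0‖ ≥ 0}`. -/
def FSubdiff {E : Type*} [NormedAddCommGroup E] [NormedSpace ℝ E]
    (φ : E → ℝ≥0∞) (w0 : E) : Set (E →L[ℝ] ℝ) :=
  {ws | ∀ ε > (0:ℝ), ∀ᶠ w in nhds w0,
    ((φ w0 : EReal) + ((ws (w - w0) - ε * ‖w - w0‖ : ℝ) : EReal)) ≤ (φ w : EReal)}

section Ekeland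

variable {α : Type*} [EMetricSpace α] {f : α → ℝ≥0∞} {c : ℝ≥0∞}

def descentSet (f : α → ℝ≥0∞) (c : ℝ≥0∞) (y : α) : Set α :=
  {z | f z + c * edist z y ≤ f y}

lemma self_mem_descentSet (y : α) : y ∈ descentSet f c y := by
  simp [descentSet]

lemma le_of_mem_descentSet {y z : α} (hz : z ∈ descentSet f c y) : f z ≤ f y :=
  le_self_add.trans hz

lemma mem_descentSet_trans {w y z : α} (hz : z ∈ descentSet f c y)
    (hy : y ∈ descentSet f c w) : z ∈ descentSet f c w :=
  calc f z + c * edist z w ≤ f z + c * edist z y + c * edist y w := by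
        rw [add_assoc, ← mul_add]; gcongr; exact edist_triangle _ _ _
    _ ≤ f w := (add_le_add_left hz _).trans hy

lemma isClosed_descentSet (hf : LowerSemicontinuous f) (hc : c ≠ ⊤) (y : α) :
    IsClosed (descentSet f c y) :=
  (hf.add ((ENNReal.continuous_const_mul hc).comp
    (continuous_id.edist continuous_const)).lowerSemicontinuous).isClosed_preimage (f y)

lemma exists_mem_descentSet_le_iInf_add (f : α → ℝ≥0∞) (c : ℝ≥0∞) (y : α) {ε : ℝ≥0∞}
    (hε : ε ≠ 0) : ∃ z ∈ descentSet f c y, f z ≤ (⨅ w ∈ descentSet f c y, f w) + ε := by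
  by_cases htop : (⨅ w ∈ descentSet f c y, f w) = ⊤
  · exact ⟨y, self_mem_descentSet y, by simp [htop]⟩
  · have := ENNReal.lt_add_right htop hε
    simp only [iInf_lt_iff] at this
    obtain ⟨z, hz, hlt⟩ := this
    exact ⟨z, hz, hlt.le⟩

lemma mul_edist_le_of_le_iInf_add {y z w : α} {ε : ℝ≥0∞} (hz : z ∈ descentSet f c y)
    (hzmin : f z ≤ (⨅ v ∈ descentSet f c y, f v) + ε) (hw : w ∈ descentSet f c z)
    (hfw : f w ≠ ⊤) : c * edist w z ≤ ε := by
  have : f w + c * edist w z ≤ f w + ε := by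
    refine hw.trans (hzmin.trans ?_)
    gcongr
    exact biInf_le f (mem_descentSet_trans hw hz)
  exact (ENNReal.add_le_add_iff_left hfw).1 this

/-- Ekeland's variational principle. -/
theorem LowerSemicontinuous.exists_mem_descentSet_forall_le [CompleteSpace α]
    (hf : LowerSemicontinuous f) (hc0 : c ≠ 0) (hc : c ≠ ⊤) {x₀ : α} (hx₀ : f x₀ ≠ ⊤) :
    ∃ v ∈ descentSet f c x₀, ∀ z, f v ≤ f z + c * edist z v := by
  choose g hg hgmin using fun (n : ℕ) (y : α) =>
    exists_mem_descentSet_le_iInf_add f c y (ε := c * 2⁻¹ ^ n) (by simp [hc0])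
  let x : ℕ → α := fun n => Nat.rec x₀ (fun k y => g k y) n
  have hmono : ∀ {m n}, m ≤ n → x n ∈ descentSet f c (x m) := by
    intro m n hmn
    induction hmn with
    | refl => exact self_mem_descentSet _
    | step _ ih => exact mem_descentSet_trans (hg _ _) ih
  have hsmall : ∀ n, ∀ z ∈ descentSet f c (x (n + 1)), edist z (x (n + 1)) ≤ 2⁻¹ ^ n := by
    intro n z hz
    have hfz : f z ≠ ⊤ := ne_top_of_le_ne_top hx₀
      ((le_of_mem_descentSet hz).trans (le_of_mem_descentSet (hmono (Nat.zero_le (n + 1)))))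
    exact (ENNReal.mul_le_mul_iff_right hc0 hc).1
      (mul_edist_le_of_le_iInf_add (hg n _) (hgmin n _) hz hfz)
  have htendsto : ∀ z, (∀ n, z ∈ descentSet f c (x n)) →
      Tendsto (fun n => x (n + 1)) atTop (𝓝 z) := by
    intro z hz
    rw [tendsto_iff_edist_tendsto_0]
    refine tendsto_of_tendsto_of_tendsto_of_le_of_le tendsto_const_nhds
      (ENNReal.tendsto_pow_atTop_nhds_zero_of_lt_one (ENNReal.inv_lt_one.2 ENNReal.one_lt_two))
      (fun _ => bot_le) fun n => ?_
    rw [edist_comm]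
    exact hsmall n z (hz (n + 1))
  have hcauchy : CauchySeq (fun n => x (n + 1)) := by
    refine cauchySeq_of_edist_le_geometric_two 1 ENNReal.one_ne_top fun n => ?_
    rw [edist_comm, one_div, ENNReal.inv_pow]
    exact hsmall n _ (hmono (Nat.le_succ _))
  obtain ⟨v, hv⟩ := cauchySeq_tendsto_of_complete hcauchy
  have hvmem : ∀ n, v ∈ descentSet f c (x n) := fun n =>
    (isClosed_descentSet hf hc _).mem_of_tendsto hv
      (eventually_atTop.2 ⟨n, fun k hk => hmono (by omega : n ≤ k + 1)⟩)
  refine ⟨v, hvmem 0, fun z => not_lt.1 fun hlt => ?_⟩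
  obtain rfl : z = v :=
    tendsto_nhds_unique (htendsto z fun n => mem_descentSet_trans hlt.le (hvmem n)) hv
  simp at hlt

theorem LowerSemicontinuous.exists_mem_descentSet_eq_zero [CompleteSpace α]
    (hf : LowerSemicontinuous f) (hc0 : c ≠ 0) (hc : c ≠ ⊤) {x₀ : α} (hx₀ : f x₀ ≠ ⊤)
    (hdesc : ∀ v ∈ descentSet f c x₀, 0 < f v → ∃ z, f z + c * edist z v < f v) :
    ∃ v ∈ descentSet f c x₀, f v = 0 := by
  obtain ⟨v, hv, hmin⟩ := hf.exists_mem_descentSet_forall_le hc0 hc hx₀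
  refine ⟨v, hv, by_contra fun hne => ?_⟩
  obtain ⟨z, hz⟩ := hdesc v hv (pos_iff_ne_zero.2 hne)
  exact (hmin z).not_gt hz

end Ekeland

section Excess

variable {Y : Type*}

lemma exc_eq_zero [PseudoEMetricSpace Y] {A C : Set Y} (h : A ⊆ C) : exc A C = 0 :=
  le_antisymm (iSup₂_le fun _ hy => (Metric.infEDist_zero_of_mem (h hy)).le) bot_le

lemma subset_of_exc_eq_zero [EMetricSpace Y] {A C : Set Y} (hC : IsClosed C)
    (h : exc A C = 0) : A ⊆ C := fun a ha => by
  rw [Metric.mem_iff_infEDist_zero_of_closed hC, ← nonpos_iff_eq_zero, ← h]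
  exact le_iSup₂ (f := fun y (_ : y ∈ A) => Metric.infEDist y C) a ha

lemma exc_pos [EMetricSpace Y] {A C : Set Y} (hC : IsClosed C) (h : ¬ A ⊆ C) : 0 < exc A C :=
  pos_iff_ne_zero.2 fun h0 => h (subset_of_exc_eq_zero hC h0)

lemma exc_le_ofReal_iff [PseudoMetricSpace Y] {A C : Set Y} (hC : C.Nonempty) {M : ℝ}
    (hM : 0 ≤ M) : exc A C ≤ ENNReal.ofReal M ↔ ∀ a ∈ A, infDist a C ≤ M := by
  simp only [exc, iSup₂_le_iff]
  refine forall₂_congr fun a _ => ?_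
  rw [infDist, ← ENNReal.ofReal_le_ofReal_iff hM, ENNReal.ofReal_toReal (infEDist_ne_top hC)]
  rfl

lemma lowerSemicontinuous_exc {X : Type*} [PseudoMetricSpace X] [PseudoEMetricSpace Y]
    {Φ : X → Set Y} (C : Set Y) (h : ∀ x, SVLscAt Φ x) :
    LowerSemicontinuous fun x => exc (Φ x) C := by
  intro x₀ b hb
  simp only [exc, lt_iSup_iff] at hb
  obtain ⟨y₀, hy₀, hb⟩ := hb
  obtain ⟨δ, hδ, hball⟩ := h x₀ {y | b < Metric.infEDist y C}
    (isOpen_lt continuous_const Metric.continuous_infEDist) ⟨y₀, hy₀, hb⟩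
  filter_upwards [closedBall_mem_nhds x₀ hδ] with x hx
  obtain ⟨y, hy, hyV⟩ := hball x hx
  exact hyV.trans_le (le_iSup₂ (f := fun y (_ : y ∈ Φ x) => Metric.infEDist y C) y hy)

end Excess

section ConvexCone

variable {Y : Type*} [NormedAddCommGroup Y] [NormedSpace ℝ Y] {C : Set Y}

lemma Convex.add_mem_of_smul_mem (hconv : Convex ℝ C)
    (hcone : ∀ t : ℝ, 0 < t → ∀ y ∈ C, t • y ∈ C) {a b : Y} (ha : a ∈ C) (hb : b ∈ C) :
    a + b ∈ C := by
  have hmid : (2⁻¹ : ℝ) • a + (2⁻¹ : ℝ) • b ∈ C :=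
    hconv ha hb (by norm_num) (by norm_num) (by norm_num)
  convert hcone 2 two_pos _ hmid using 1
  rw [smul_add, smul_inv_smul₀ two_ne_zero, smul_inv_smul₀ two_ne_zero]

lemma closedBall_subset_of_add_smul_subset {S : Set Y} {h : Y} (hh : h ∈ S) {r : ℝ}
    (hr : 0 ≤ r) (hS : S + r • closedBall (0 : Y) 1 ⊆ C) : closedBall h r ⊆ C := by
  intro y hy
  rw [← add_sub_cancel h y]
  refine hS (add_mem_add hh ?_)
  rw [smul_unitClosedBall_of_nonneg hr, mem_closedBall_zero_iff, ← dist_eq_norm']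
  exact mem_closedBall'.1 hy

lemma infDist_add_smul_le_of_mem (hconv : Convex ℝ C)
    (hcone : ∀ t : ℝ, 0 < t → ∀ y ∈ C, t • y ∈ C) {h : Y} {r t : ℝ} (hr : 0 ≤ r) (ht : 0 < t)
    (hball : closedBall h r ⊆ C) (a : Y) {c : Y} (hc : c ∈ C) :
    infDist (a + t • h) C ≤ max (dist a c - t * r) 0 := by
  set d := dist a c
  -- move `c` towards `a` by `min d (t * r)`, which the ball around `h` can absorb
  set l := min d (t * r) / d
  have hld : l * d = min d (t * r) := by
    rcases (dist_nonneg : 0 ≤ d).eq_or_lt with hd | hd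
    · simp [l, d, ← hd, mul_nonneg ht.le hr]
    · exact div_mul_cancel₀ _ hd.ne'
  have hl1 : l ≤ 1 := div_le_one_of_le₀ (min_le_left _ _) dist_nonneg
  have hmem : c + t • (h + (l / t) • (a - c)) ∈ C := by
    refine hconv.add_mem_of_smul_mem hcone hc (hcone t ht _ (hball ?_))
    rw [mem_closedBall, dist_eq_norm, add_sub_cancel_left, norm_smul, ← dist_eq_norm,
      Real.norm_of_nonneg (by positivity), div_mul_eq_mul_div, hld, div_le_iff₀ ht]
    linarith [min_le_right d (t * r)]
  calc infDist (a + t • h) C ≤ dist (a + t • h) (c + t • (h + (l / t) • (a - c))) :=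
        infDist_le_dist_of_mem hmem
    _ = (1 - l) * d := by
        rw [smul_add, smul_smul, mul_div_cancel₀ _ ht.ne', dist_eq_norm,
          show a + t • h - (c + (t • h + l • (a - c))) = (1 - l) • (a - c) by module,
          norm_smul, Real.norm_of_nonneg (by linarith), ← dist_eq_norm]
    _ = max (d - t * r) 0 := by
        rw [sub_mul, one_mul, hld]
        rcases le_total d (t * r) with hle | hle <;> simp [hle]

lemma infDist_add_smul_le (hconv : Convex ℝ C)
    (hcone : ∀ t : ℝ, 0 < t → ∀ y ∈ C, t • y ∈ C) {h : Y} {r t : ℝ} (hr : 0 ≤ r) (ht : 0 < t)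
    (hball : closedBall h r ⊆ C) (a : Y) :
    infDist (a + t • h) C ≤ max (infDist a C - t * r) 0 := by
  have hC : C.Nonempty := ⟨h, hball (mem_closedBall_self hr)⟩
  refine le_of_forall_pos_lt_add fun η hη => ?_
  obtain ⟨c, hc, hac⟩ := (infDist_lt_iff hC).1 (lt_add_of_pos_right (infDist a C) hη)
  calc infDist (a + t • h) C ≤ max (dist a c - t * r) 0 :=
        infDist_add_smul_le_of_mem hconv hcone hr ht hball a hc
    _ < max (infDist a C - t * r) 0 + η :=
        max_lt (by linarith [le_max_left (infDist a C - t * r) 0])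
          (by linarith [le_max_right (infDist a C - t * r) 0])

end ConvexCone

section OuterPrederivative

variable {X Y : Type*} [NormedAddCommGroup X] [NormedSpace ℝ X]
  [NormedAddCommGroup Y] [NormedSpace ℝ Y] {C : Set Y} {Φ H : X → Set Y} {v u : X} {r : ℝ}

lemma IsOuterPrederivAt.exists_infDist_le (hpre : IsOuterPrederivAt Φ H v)
    (hconv : Convex ℝ C) (hcone : ∀ t : ℝ, 0 < t → ∀ y ∈ C, t • y ∈ C) (hu : ‖u‖ = 1)
    (hr : 0 ≤ r) (hcore : H u + r • closedBall (0 : Y) 1 ⊆ C) {M : ℝ}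
    (hM : ∀ a ∈ Φ v, infDist a C ≤ M) {ε : ℝ} (hε : 0 < ε) :
    ∃ δ > 0, ∀ t, 0 < t → t ≤ δ → ∀ y ∈ Φ (v + t • u),
      infDist y C ≤ max (M - t * r) 0 + ε * t := by
  obtain ⟨hhom, happrox⟩ := hpre
  obtain ⟨δ, hδ, hincl⟩ := happrox ε hε
  refine ⟨δ, hδ, fun t ht htδ y hy => ?_⟩
  have hnorm : ‖t • u‖ = t := by rw [norm_smul, hu, mul_one, Real.norm_of_nonneg ht.le]
  have hy' := hincl (v + t • u)
    (by rwa [mem_closedBall, dist_eq_norm, add_sub_cancel_left, hnorm]) hy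
  rw [add_sub_cancel_left, hhom t ht u, hnorm, smul_unitClosedBall_of_nonneg (by positivity)] at hy'
  obtain ⟨_, ⟨a, ha, _, ⟨h, hh, rfl⟩, rfl⟩, w, hw, rfl⟩ := hy'
  calc infDist (a + t • h + w) C ≤ infDist (a + t • h) C + ‖w‖ := by
        simpa [dist_eq_norm] using
          infDist_le_infDist_add_dist (s := C) (x := a + t • h + w) (y := a + t • h)
    _ ≤ max (infDist a C - t * r) 0 + ε * t :=
        add_le_add (infDist_add_smul_le hconv hcone hr ht
          (closedBall_subset_of_add_smul_subset hh hr hcore) a) (mem_closedBall_zero_iff.1 hw)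
    _ ≤ max (M - t * r) 0 + ε * t := by gcongr; exact hM a ha

lemma IsOuterPrederivAt.exists_exc_add_lt (hpre : IsOuterPrederivAt Φ H v)
    (hCclosed : IsClosed C) (hconv : Convex ℝ C) (hcone : ∀ t : ℝ, 0 < t → ∀ y ∈ C, t • y ∈ C)
    (hu : ‖u‖ = 1) (hcore : H u + r • closedBall (0 : Y) 1 ⊆ C) {c : ℝ} (hc : 0 ≤ c)
    (hcr : c < r) (hv : ¬ Φ v ⊆ C) (hfin : exc (Φ v) C ≠ ⊤) :
    ∃ z, exc (Φ z) C + ENNReal.ofReal c * edist z v < exc (Φ v) C := by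
  set M := (exc (Φ v) C).toReal
  have hM : 0 < M := ENNReal.toReal_pos (exc_pos hCclosed hv).ne' hfin
  have hCne : C.Nonempty := by
    obtain ⟨a, ha, -⟩ := not_subset.1 hv
    refine nonempty_iff_ne_empty.2 fun hC => hfin (top_le_iff.1 ?_)
    calc ⊤ = Metric.infEDist a C := by rw [hC, Metric.infEDist_empty]
      _ ≤ exc (Φ v) C := le_iSup₂ (f := fun y (_ : y ∈ Φ v) => Metric.infEDist y C) a ha
  have hMbound : ∀ a ∈ Φ v, infDist a C ≤ M :=
    (exc_le_ofReal_iff hCne hM.le).1 (ENNReal.ofReal_toReal hfin).ge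
  obtain ⟨δ, hδ, hdesc⟩ := hpre.exists_infDist_le hconv hcone hu (hc.trans hcr.le) hcore hMbound
    (half_pos (sub_pos.2 hcr))
  set t := min δ (M / r)
  have hr : 0 < r := hc.trans_lt hcr
  have ht : 0 < t := lt_min hδ (div_pos hM hr)
  have htr : t * r ≤ M := (le_div_iff₀ hr).1 (min_le_right _ _)
  have hexc : exc (Φ (v + t • u)) C ≤ ENNReal.ofReal (M - t * r + (r - c) / 2 * t) := by
    refine (exc_le_ofReal_iff hCne (by nlinarith)).2 fun y hy => ?_
    simpa [max_eq_left (sub_nonneg.2 htr)] using hdesc t ht (min_le_left _ _) y hy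
  have hedist : edist (v + t • u) v = ENNReal.ofReal t := by
    rw [edist_dist, dist_eq_norm, add_sub_cancel_left, norm_smul, hu, mul_one,
      Real.norm_of_nonneg ht.le]
  refine ⟨v + t • u, ?_⟩
  calc exc (Φ (v + t • u)) C + ENNReal.ofReal c * edist (v + t • u) v
      ≤ ENNReal.ofReal (M - t * r + (r - c) / 2 * t) + ENNReal.ofReal (c * t) := by
        rw [hedist, ← ENNReal.ofReal_mul hc]; gcongr
    _ = ENNReal.ofReal (M - t * r + (r - c) / 2 * t + c * t) :=
        (ENNReal.ofReal_add (by nlinarith) (by positivity)).symm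
    _ < ENNReal.ofReal M := (ENNReal.ofReal_lt_ofReal_iff hM).2 (by nlinarith)
    _ = exc (Φ v) C := ENNReal.ofReal_toReal hfin

end OuterPrederivative

theorem exists_subset_edist_le_exc {X Y : Type*} [NormedAddCommGroup X] [NormedSpace ℝ X]
    [CompleteSpace X] [NormedAddCommGroup Y] [NormedSpace ℝ Y] {C : Set Y}
    (hCclosed : IsClosed C) (hconv : Convex ℝ C) (hcone : ∀ t : ℝ, 0 < t → ∀ y ∈ C, t • y ∈ C)
    {Φ : X → Set Y} (hlsc : ∀ x, SVLscAt Φ x) {H : X → X → Set Y} {xbar : X} {δ : ℝ}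
    (hH : ∀ x ∈ closedBall xbar δ, IsOuterPrederivAt Φ (H x) x) {c : ℝ} (hc : 0 < c)
    (hdir : ∀ x ∈ closedBall xbar δ, ¬ Φ x ⊆ C →
      ∃ u : X, ‖u‖ = 1 ∧ ∃ r > c, H x u + r • closedBall (0 : Y) 1 ⊆ C)
    {x' : X} (hx' : x' ∈ closedBall xbar (δ / 2))
    (hsmall : exc (Φ x') C ≤ ENNReal.ofReal (c * (δ / 2))) :
    ∃ x'', Φ x'' ⊆ C ∧ ENNReal.ofReal c * edist x'' x' ≤ exc (Φ x') C := by
  set f := fun x => exc (Φ x) C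
  have hfin : f x' ≠ ⊤ := ne_top_of_le_ne_top ENNReal.ofReal_ne_top hsmall
  have hdesc : ∀ v ∈ descentSet f (ENNReal.ofReal c) x', 0 < f v →
      ∃ z, f z + ENNReal.ofReal c * edist z v < f v := by
    intro v hv hpos
    have hvx' : dist v x' ≤ δ / 2 := by
      have := (le_add_self.trans hv).trans hsmall
      rwa [edist_dist, ← ENNReal.ofReal_mul hc.le,
        ENNReal.ofReal_le_ofReal_iff (by nlinarith [dist_nonneg.trans hx']),
        mul_le_mul_iff_right₀ hc] at this
    have hvball : v ∈ closedBall xbar δ := by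
      rw [mem_closedBall] at hx' ⊢
      linarith [dist_triangle v x' xbar]
    have hv' : ¬ Φ v ⊆ C := fun h => hpos.ne' (exc_eq_zero h)
    obtain ⟨u, hu, r, hcr, hcore⟩ := hdir v hvball hv'
    exact (hH v hvball).exists_exc_add_lt hCclosed hconv hcone hu hcore hc.le hcr hv'
      (ne_top_of_le_ne_top hfin (le_of_mem_descentSet hv))
  obtain ⟨v, hv, hzero⟩ := (lowerSemicontinuous_exc C hlsc).exists_mem_descentSet_eq_zero
    (ENNReal.ofReal_pos.2 hc).ne' ENNReal.ofReal_ne_top hfin hdesc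
  exact ⟨v, subset_of_exc_eq_zero hCclosed hzero, le_add_self.trans hv⟩

lemma EReal.coe_le_coe_ennreal_iff_ofReal_le {a : ℝ} {v : ℝ≥0∞} :
    (a : EReal) ≤ v ↔ ENNReal.ofReal a ≤ v := by
  rw [← EReal.coe_ennreal_le_coe_ennreal_iff, EReal.coe_ennreal_ofReal]
  rcases le_total 0 a with ha | ha
  · rw [max_eq_left ha]
  · rw [max_eq_right ha, EReal.coe_zero]
    exact iff_of_true ((EReal.coe_le_coe_iff.2 ha).trans (EReal.coe_ennreal_nonneg v))
      (EReal.coe_ennreal_nonneg v)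

section Frechet

variable {E : Type*} [NormedAddCommGroup E] {φ : E → ℝ≥0∞} {S : Set E} {w₀ : E}

lemma eventually_exists_mem_norm_sub_le {c θ ρ K : ℝ} (hc : 0 < c) (hθ : 0 < θ) (hρ : 0 < ρ)
    (hK : 0 ≤ K)
    (herr : ∀ w ∈ ball w₀ ρ, φ w ≤ ENNReal.ofReal θ →
      ∃ w' ∈ S, ENNReal.ofReal c * edist w' w ≤ φ w) :
    ∀ᶠ w in 𝓝 w₀, φ w < ENNReal.ofReal (K * ‖w - w₀‖) →
      ∃ w' ∈ S, c * dist w' w ≤ (φ w).toReal ∧ ‖w' - w₀‖ ≤ (1 + K / c) * ‖w - w₀‖ := by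
  have hρ' : 0 < min ρ (θ / (K + 1)) := lt_min hρ (by positivity)
  filter_upwards [ball_mem_nhds w₀ hρ'] with w hw hsmall
  rw [mem_ball, dist_eq_norm] at hw
  have hKθ : K * ‖w - w₀‖ ≤ θ := by
    calc K * ‖w - w₀‖ ≤ K * (θ / (K + 1)) := by gcongr; exact hw.le.trans (min_le_right _ _)
      _ ≤ θ := by rw [mul_div_assoc', div_le_iff₀ (by positivity)]; nlinarith
  have htop : φ w ≠ ⊤ := ne_top_of_lt hsmall
  obtain ⟨w', hw'S, hw'⟩ := herr w (mem_ball_iff_norm.2 (hw.trans_le (min_le_left _ _)))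
    (hsmall.le.trans (ENNReal.ofReal_le_ofReal hKθ))
  rw [edist_dist, ← ENNReal.ofReal_mul hc.le, ENNReal.ofReal_le_iff_le_toReal htop] at hw'
  have hT : (φ w).toReal ≤ K * ‖w - w₀‖ :=
    (ENNReal.toReal_le_of_le_ofReal (by positivity) hsmall.le)
  refine ⟨w', hw'S, hw', ?_⟩
  have hdist : dist w' w ≤ K / c * ‖w - w₀‖ := by
    rw [div_mul_eq_mul_div, le_div_iff₀ hc]
    linarith
  calc ‖w' - w₀‖ ≤ dist w' w + ‖w - w₀‖ := by
        rw [← dist_eq_norm, ← dist_eq_norm]; exact dist_triangle _ _ _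
    _ ≤ (1 + K / c) * ‖w - w₀‖ := by linarith

variable [NormedSpace ℝ E]

lemma mem_FSubdiff_iff_of_eq_zero (h0 : φ w₀ = 0) {ws : E →L[ℝ] ℝ} :
    ws ∈ FSubdiff φ w₀ ↔
      ∀ ε > 0, ∀ᶠ w in 𝓝 w₀, ENNReal.ofReal (ws (w - w₀) - ε * ‖w - w₀‖) ≤ φ w := by
  simp only [FSubdiff, mem_ofPred_eq, h0, EReal.coe_ennreal_zero, zero_add,
    EReal.coe_le_coe_ennreal_iff_ofReal_le]

lemma smul_mem_FNormalCone_of_mem_FSubdiff (h0 : φ w₀ = 0) (hS : ∀ w ∈ S, φ w = 0)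
    {ws : E →L[ℝ] ℝ} (hws : ws ∈ FSubdiff φ w₀) {κ : ℝ} (hκ : 0 < κ) :
    κ • ws ∈ FNormalCone S w₀ := by
  intro ε hε
  have hev := (mem_FSubdiff_iff_of_eq_zero h0).1 hws (ε / κ) (by positivity)
  filter_upwards [nhdsWithin_le_nhds hev, self_mem_nhdsWithin] with w hw hwS
  rw [hS w hwS, nonpos_iff_eq_zero, ENNReal.ofReal_eq_zero, sub_nonpos] at hw
  calc (κ • ws) (w - w₀) = κ * ws (w - w₀) := rfl
    _ ≤ κ * (ε / κ * ‖w - w₀‖) := by gcongr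
    _ = ε * ‖w - w₀‖ := by field_simp

lemma exists_smul_mem_FSubdiff_of_mem_FNormalCone (h0 : φ w₀ = 0) {c θ ρ : ℝ} (hc : 0 < c)
    (hθ : 0 < θ) (hρ : 0 < ρ)
    (herr : ∀ w ∈ ball w₀ ρ, φ w ≤ ENNReal.ofReal θ →
      ∃ w' ∈ S, ENNReal.ofReal c * edist w' w ≤ φ w)
    {W : E →L[ℝ] ℝ} (hW : W ∈ FNormalCone S w₀) :
    ∃ κ : ℝ, 0 < κ ∧ ∃ ws ∈ FSubdiff φ w₀, W = κ • ws := by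
  set M := ‖W‖
  set κ := 1 + M / c
  have hκ1 : 1 ≤ κ := le_add_of_nonneg_right (by positivity)
  have hκ : 0 < κ := zero_lt_one.trans_le hκ1
  refine ⟨κ, hκ, κ⁻¹ • W, ?_, (smul_inv_smul₀ hκ.ne' W).symm⟩
  rw [mem_FSubdiff_iff_of_eq_zero h0]
  intro ε hε
  obtain ⟨δ₀, hδ₀, hN⟩ := Metric.eventually_nhds_iff.1 (eventually_nhdsWithin_iff.1 (hW ε hε))
  filter_upwards [eventually_exists_mem_norm_sub_le hc hθ hρ (norm_nonneg W) herr,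
    ball_mem_nhds w₀ (div_pos hδ₀ hκ)] with w hnear hw
  rw [mem_ball, dist_eq_norm] at hw
  set D := ‖w - w₀‖
  by_cases htop : φ w = ⊤
  · simp [htop]
  rw [ENNReal.ofReal_le_iff_le_toReal htop]
  set T := (φ w).toReal
  suffices hWle : W (w - w₀) ≤ κ * (ε * D + T) by
    calc κ⁻¹ * W (w - w₀) - ε * D ≤ κ⁻¹ * (κ * (ε * D + T)) - ε * D := by gcongr
      _ = T := by field_simp; ring
  have hWD : ∀ v, W v ≤ M * ‖v‖ := fun v => (le_abs_self _).trans (W.le_opNorm v)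
  by_cases hcase : M * D ≤ κ * T
  · calc W (w - w₀) ≤ κ * T := (hWD _).trans hcase
      _ ≤ κ * (ε * D + T) := by gcongr; exact le_add_of_nonneg_left (by positivity)
  rw [not_le] at hcase
  -- the merit of `w` is small compared with `‖w - w₀‖`, so the error bound gives `w' ∈ S` near `w₀`
  have hTMD : T < M * D := (le_mul_of_one_le_left ENNReal.toReal_nonneg hκ1).trans_lt hcase
  obtain ⟨w', hw'S, hdist, hw'w₀⟩ :=
    hnear (by rwa [← ENNReal.ofReal_toReal htop,
      ENNReal.ofReal_lt_ofReal_iff (ENNReal.toReal_nonneg.trans_lt hTMD)])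
  have hN' : W (w' - w₀) ≤ ε * ‖w' - w₀‖ := hN (by
    rw [dist_eq_norm]
    calc ‖w' - w₀‖ ≤ κ * D := hw'w₀
      _ < κ * (δ₀ / κ) := by gcongr
      _ = δ₀ := by field_simp) hw'S
  calc W (w - w₀) = W (w' - w₀) + W (w - w') := by rw [← map_add]; congr 1; abel
    _ ≤ ε * (κ * D) + M * (T / c) := by
        gcongr
        · exact hN'.trans (by gcongr)
        · refine (hWD _).trans ?_
          rw [← dist_eq_norm, dist_comm]
          gcongr
          rwa [le_div_iff₀ hc, mul_comm]
    _ ≤ ε * (κ * D) + κ * T := by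
        rw [← mul_comm_div]
        gcongr
        exact le_add_of_nonneg_left zero_le_one
    _ = κ * (ε * D + T) := by ring

end Frechet

lemma exists_add_smul_subset_of_lt_iSup_coreSet {X Y : Type*} [NormedAddCommGroup X]
    [NormedAddCommGroup Y] [NormedSpace ℝ Y] {K : Set Y} {G : X → Set Y} {s : ℝ}
    (h : ENNReal.ofReal s < ⨆ u ∈ sphere (0 : X) 1, coreSet K (G u)) :
    ∃ u : X, ‖u‖ = 1 ∧ ∃ r > s, G u + r • closedBall (0 : Y) 1 ⊆ K := by
  simp only [coreSet, lt_iSup_iff] at h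
  obtain ⟨u, hu, r, ⟨hr, hsub⟩, hlt⟩ := h
  exact ⟨u, mem_sphere_zero_iff_norm.1 hu, r, (ENNReal.ofReal_lt_ofReal_iff hr).1 hlt, hsub⟩

theorem coderivative_of_Solv_via_merit_function_general
    {P X Y : Type*} [NormedAddCommGroup P] [NormedSpace ℝ P]
    [NormedAddCommGroup X] [NormedSpace ℝ X] [CompleteSpace X]
    [NormedAddCommGroup Y] [NormedSpace ℝ Y]
    (C : Set Y) (hCclosed : IsClosed C) (hCconv : Convex ℝ C)
    (hCcone : ∀ t : ℝ, 0 < t → ∀ y ∈ C, t • y ∈ C)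
    (F : P → X → Set Y)
    (pbar : P) (xbar : X)
    (hlsc : ∃ δ₁ > (0:ℝ), ∀ p ∈ closedBall pbar δ₁, ∀ x : X, SVLscAt (F p) x)
    (δ₂ : ℝ) (hδ₂ : 0 < δ₂) (H : P → X → X → Set Y)
    (hH : ∀ p ∈ closedBall pbar δ₂, ∀ x ∈ closedBall xbar δ₂,
      IsOuterPrederivAt (F p) (H p x) x)
    (σH : ℝ≥0∞)
    (hσHdef : σH = ⨅ q : {q : P × X // q.1 ∈ closedBall pbar δ₂ ∧ q.2 ∈ closedBall xbar δ₂ ∧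
        ¬ F q.1 q.2 ⊆ C}, ⨆ u ∈ sphere (0:X) 1, coreSet C (H q.val.1 q.val.2 u))
    (hσHpos : 0 < σH) :
    ∃ ζ > (0:ℝ), ∃ η > (0:ℝ),
      ∀ p ∈ Metric.ball pbar ζ, ∀ x ∈ Metric.ball xbar η, F p x ⊆ C →
        ∀ xs : X →L[ℝ] ℝ, ∀ ps : P →L[ℝ] ℝ,
          (ps.coprod (-xs) ∈ FNormalCone {q : P × X | F q.1 q.2 ⊆ C} (p, x) ↔
            ∃ κ : ℝ, 0 < κ ∧ ∃ ws ∈ FSubdiff (fun q : P × X => exc (F q.1 q.2) C) (p, x),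
              ps.coprod (-xs) = κ • ws) := by
  obtain ⟨δ₁, hδ₁, hlscF⟩ := hlsc
  obtain ⟨s, hs0, hs, hsσ⟩ := ENNReal.lt_iff_exists_real_btwn.1 hσHpos
  replace hs : 0 < s := ENNReal.ofReal_pos.1 hs
  have hdir : ∀ p ∈ closedBall pbar δ₂, ∀ x ∈ closedBall xbar δ₂, ¬ F p x ⊆ C →
      ∃ u : X, ‖u‖ = 1 ∧ ∃ r > s, H p x u + r • closedBall (0 : Y) 1 ⊆ C := by
    intro p hp x hx hns
    refine exists_add_smul_subset_of_lt_iSup_coreSet (hsσ.trans_le ?_)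
    rw [hσHdef]
    exact iInf_le_of_le ⟨(p, x), hp, hx, hns⟩ le_rfl
  refine ⟨min δ₁ δ₂ / 2, by positivity, δ₂ / 4, by positivity, fun p hp x hx hpx xs ps => ?_⟩
  have herr : ∀ w ∈ ball (p, x) (min (min δ₁ δ₂ / 2) (δ₂ / 4)),
      exc (F w.1 w.2) C ≤ ENNReal.ofReal (s * (δ₂ / 2)) →
      ∃ w' ∈ {q : P × X | F q.1 q.2 ⊆ C}, ENNReal.ofReal s * edist w' w ≤ exc (F w.1 w.2) C := by
    rintro ⟨p', x'⟩ hw hsmall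
    rw [mem_ball, Prod.dist_eq, max_lt_iff, lt_min_iff, lt_min_iff] at hw
    rw [mem_ball] at hp hx
    have hp' : dist p' pbar ≤ min δ₁ δ₂ := by linarith [dist_triangle p' p pbar]
    have hx' : x' ∈ closedBall xbar (δ₂ / 2) := by
      rw [mem_closedBall]; linarith [dist_triangle x' x xbar]
    obtain ⟨x'', hx''C, hx''⟩ := exists_subset_edist_le_exc hCclosed hCconv hCcone
      (hlscF p' (hp'.trans (min_le_left _ _))) (hH p' (hp'.trans (min_le_right _ _))) hs
      (hdir p' (hp'.trans (min_le_right _ _))) hx' hsmall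
    exact ⟨(p', x''), hx''C, by simpa [Prod.edist_eq] using hx''⟩
  have h0 : exc (F p x) C = 0 := exc_eq_zero hpx
  set φ := fun q : P × X => exc (F q.1 q.2) C
  exact ⟨exists_smul_mem_FSubdiff_of_mem_FNormalCone (φ := φ) h0 hs (by positivity)
      (by positivity) herr,
    fun ⟨κ, hκ, ws, hws, hW⟩ =>
      hW ▸ smul_mem_FNormalCone_of_mem_FSubdiff (φ := φ) h0 (fun _ => exc_eq_zero) hws hκ⟩

/-- **Coderivative of the solution mapping via the merit function.**
`P × X` carries the max-norm (the product norm); the Fréchet coderivative of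
`Solv` at `(p,x)` applied to `x*` is `{p* : (p*,−x*) ∈ N̂(graph Solv,(p,x))}`, and it
coincides with `{p* : (p*,−x*) ∈ cone ∂̂ν_{F,C}(p,x)}`. -/
theorem coderivative_of_Solv_via_merit_function
    {P X Y : Type*} [NormedAddCommGroup P] [NormedSpace ℝ P]
    [NormedAddCommGroup X] [NormedSpace ℝ X] [CompleteSpace X]
    [NormedAddCommGroup Y] [NormedSpace ℝ Y]
    (C : Set Y) (hCclosed : IsClosed C) (hCconv : Convex ℝ C)
    (hCcone : ∀ t : ℝ, 0 < t → ∀ y ∈ C, t • y ∈ C) (hCint : (interior C).Nonempty)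
    (F : P → X → Set Y) (hFne : ∀ p x, (F p x).Nonempty)
    (pbar : P) (xbar : X)
    (hsol : F pbar xbar ⊆ C)
    (husc : UpperSemicontinuousAt (fun p => exc (F p xbar) C) pbar)
    (hlsc : ∃ δ₁ > (0:ℝ), ∀ p ∈ closedBall pbar δ₁, ∀ x : X, SVLscAt (F p) x)
    (δ₂ : ℝ) (hδ₂ : 0 < δ₂) (H : P → X → X → Set Y)
    (hH : ∀ p ∈ closedBall pbar δ₂, ∀ x ∈ closedBall xbar δ₂,
      IsOuterPrederivAt (F p) (H p x) x)
    (σH : ℝ≥0∞)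
    (hσHdef : σH = ⨅ q : {q : P × X // q.1 ∈ closedBall pbar δ₂ ∧ q.2 ∈ closedBall xbar δ₂ ∧
        ¬ F q.1 q.2 ⊆ C}, ⨆ u ∈ sphere (0:X) 1, coreSet C (H q.val.1 q.val.2 u))
    (hσHpos : 0 < σH) :
    ∃ ζ > (0:ℝ), ∃ η > (0:ℝ),
      ∀ p ∈ Metric.ball pbar ζ, ∀ x ∈ Metric.ball xbar η, F p x ⊆ C →
        ∀ xs : X →L[ℝ] ℝ, ∀ ps : P →L[ℝ] ℝ,
          (ps.coprod (-xs) ∈ FNormalCone {q : P × X | F q.1 q.2 ⊆ C} (p, x) ↔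
            ∃ κ : ℝ, 0 < κ ∧ ∃ ws ∈ FSubdiff (fun q : P × X => exc (F q.1 q.2) C) (p, x),
              ps.coprod (-xs) = κ • ws) :=
  coderivative_of_Solv_via_merit_function_general C hCclosed hCconv hCcone F pbar xbar hlsc δ₂ hδ₂ H
    hH σH hσHdef hσHpos
end

section
/- Let P, X, Y be normed vector spaces, C ⊆ Y a closed convex cone, and F: P×X ⇉ Y a set-valued mapping with nonempty values which is C-concave on P×X. Then the merit function ν_{F,C}: P×X → [0,+∞], ν_{F,C}(p,x) = sup_{y∈F(p,x)} dist(y,C), is a convex function: ν_{F,C}(t(p1,x1) + (1−t)(p2,x2)) ≤ t ν_{F,C}(p1,x1) + (1−t) ν_{F,C}(p2,x2) for all (p1,x1), (p2,x2) ∈ P×X and t ∈ [0,1]. -/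
open Set
open scoped ENNReal Pointwise

/-!
The excess is monotone in its first argument, antitone in its second, subadditive under
Minkowski sums, `e(A + B, C + D) ≤ e(A, C) + e(B, D)`, and positively homogeneous. A convex
cone satisfies `t • C + (1 - t) • C + C ⊆ C`, so `C`-concavity of `F` gives
`e(F(w), C) ≤ e(t • F(w₁) + (1 - t) • F(w₂) + C, t • C + (1 - t) • C + C)`,
and the right side splits into `t e(F(w₁), C) + (1 - t) e(F(w₂), C) + e(C, C)`,
where `e(C, C) = 0`.
-/

open Metric

theorem Convex.add_subset_of_smul_mem {𝕜 E : Type*} [Field 𝕜] [LinearOrder 𝕜]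
    [IsStrictOrderedRing 𝕜] [AddCommGroup E] [Module 𝕜 E] {C : Set E} (hconv : Convex 𝕜 C)
    (hcone : ∀ t : 𝕜, 0 < t → ∀ y ∈ C, t • y ∈ C) : C + C ⊆ C := by
  rintro _ ⟨u, hu, v, hv, rfl⟩
  have h := hcone 2 two_pos _ (hconv hu hv (by norm_num : (0 : 𝕜) ≤ 2⁻¹)
    (by norm_num : (0 : 𝕜) ≤ 2⁻¹) (by norm_num))
  rwa [smul_add, smul_inv_smul₀ two_ne_zero, smul_inv_smul₀ two_ne_zero] at h

theorem infEDist_add_add_le {E : Type*} [SeminormedAddCommGroup E] (x y : E) (s t : Set E) :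
    infEDist (x + y) (s + t) ≤ infEDist x s + infEDist y t := by
  simp only [infEDist, ENNReal.iInf₂_add, ENNReal.add_iInf₂]
  refine le_iInf₂ fun b hb => le_iInf₂ fun a ha => ?_
  exact (infEDist_le_edist_of_mem (add_mem_add ha hb)).trans (edist_add_add_le _ _ _ _)

theorem infEDist_smul₀_of_nonempty {𝕜 E : Type*} [NormedDivisionRing 𝕜]
    [SeminormedAddCommGroup E] [Module 𝕜 E] [NormSMulClass 𝕜 E] {s : Set E} (hs : s.Nonempty)
    (c : 𝕜) (x : E) : infEDist (c • x) (c • s) = ‖c‖ₑ * infEDist x s := by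
  rcases eq_or_ne c 0 with rfl | hc
  · rw [zero_smul, zero_smul_set hs, enorm_zero, zero_mul]
    exact infEDist_zero_of_mem rfl
  · rw [infEDist_smul₀ hc]
    rfl

section exc

variable {E : Type*}

theorem exc_eq_iSup_infEDist [PseudoEMetricSpace E] (A C : Set E) :
    exc A C = ⨆ y ∈ A, infEDist y C :=
  rfl

theorem exc_mono [PseudoEMetricSpace E] {A A' C C' : Set E} (hA : A ⊆ A') (hC : C' ⊆ C) :
    exc A C ≤ exc A' C' := by
  rw [exc_eq_iSup_infEDist, exc_eq_iSup_infEDist]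
  exact (biSup_mono hA).trans (iSup₂_mono fun _ _ => infEDist_anti hC)

theorem exc_self [PseudoEMetricSpace E] (C : Set E) : exc C C = 0 := by
  simpa [exc_eq_iSup_infEDist] using fun _ => infEDist_zero_of_mem

theorem exc_add_add_le [SeminormedAddCommGroup E] (A B C D : Set E) :
    exc (A + B) (C + D) ≤ exc A C + exc B D := by
  rw [exc_eq_iSup_infEDist, exc_eq_iSup_infEDist, exc_eq_iSup_infEDist]
  refine iSup₂_le ?_
  rintro _ ⟨a, ha, b, hb, rfl⟩
  exact (infEDist_add_add_le a b C D).trans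
    (add_le_add (le_iSup₂ (f := fun y _ => infEDist y C) a ha)
      (le_iSup₂ (f := fun y _ => infEDist y D) b hb))

theorem exc_smul₀ {𝕜 : Type*} [NormedDivisionRing 𝕜] [SeminormedAddCommGroup E]
    [Module 𝕜 E] [NormSMulClass 𝕜 E] {C : Set E} (hC : C.Nonempty) (c : 𝕜) (A : Set E) :
    exc (c • A) (c • C) = ‖c‖ₑ * exc A C := by
  rw [exc_eq_iSup_infEDist, exc_eq_iSup_infEDist, ← image_smul, iSup_image, ENNReal.mul_iSup]
  simp only [infEDist_smul₀_of_nonempty hC, ENNReal.mul_iSup]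

end exc

theorem merit_function_convex_of_C_concave_general
    {P X Y : Type*} [NormedAddCommGroup P] [NormedSpace ℝ P]
    [NormedAddCommGroup X] [NormedSpace ℝ X]
    [NormedAddCommGroup Y] [NormedSpace ℝ Y]
    (C : Set Y) (hCconv : Convex ℝ C)
    (hCcone : ∀ t : ℝ, 0 < t → ∀ y ∈ C, t • y ∈ C)
    (F : P → X → Set Y) (hFne : ∀ p x, (F p x).Nonempty)
    (hFconc : ∀ w₁ w₂ : P × X, ∀ t ∈ Icc (0:ℝ) 1,
      F (t • w₁ + (1 - t) • w₂).1 (t • w₁ + (1 - t) • w₂).2 ⊆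
        t • F w₁.1 w₁.2 + (1 - t) • F w₂.1 w₂.2 + C) :
    ∀ w₁ w₂ : P × X, ∀ t ∈ Icc (0:ℝ) 1,
      exc (F (t • w₁ + (1 - t) • w₂).1 (t • w₁ + (1 - t) • w₂).2) C ≤
        ENNReal.ofReal t * exc (F w₁.1 w₁.2) C +
        ENNReal.ofReal (1 - t) * exc (F w₂.1 w₂.2) C := by
  intro w₁ w₂ t ht
  have hFw := hFconc w₁ w₂ t ht
  have hCne : C.Nonempty := ((hFne _ _).mono hFw).of_add_right
  have ht₀ : 0 ≤ t := ht.1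
  have ht₁ : 0 ≤ 1 - t := sub_nonneg.2 ht.2
  have hCsub : t • C + (1 - t) • C + C ⊆ C :=
    (add_subset_add_right (hCconv.set_combo_subset ht₀ ht₁ (add_sub_cancel t 1))).trans
      (hCconv.add_subset_of_smul_mem hCcone)
  calc _ ≤ exc (t • F w₁.1 w₁.2 + (1 - t) • F w₂.1 w₂.2 + C)
          (t • C + (1 - t) • C + C) := exc_mono hFw hCsub
    _ ≤ exc (t • F w₁.1 w₁.2) (t • C) + exc ((1 - t) • F w₂.1 w₂.2) ((1 - t) • C)
          + exc C C :=
        (exc_add_add_le _ _ _ _).trans (add_le_add (exc_add_add_le _ _ _ _) le_rfl)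
    _ = _ := by
        rw [exc_smul₀ hCne, exc_smul₀ hCne, exc_self, add_zero, Real.enorm_of_nonneg ht₀,
          Real.enorm_of_nonneg ht₁]

/-- If `F : P × X ⇉ Y` is `C`-concave (with `C` a closed convex cone), then the
merit function `ν_{F,C}(p,x) = sup_{y ∈ F(p,x)} dist(y,C)` is convex. -/
theorem merit_function_convex_of_C_concave
    {P X Y : Type*} [NormedAddCommGroup P] [NormedSpace ℝ P]
    [NormedAddCommGroup X] [NormedSpace ℝ X]
    [NormedAddCommGroup Y] [NormedSpace ℝ Y]
    (C : Set Y) (hCclosed : IsClosed C) (hCconv : Convex ℝ C)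
    (hCcone : ∀ t : ℝ, 0 < t → ∀ y ∈ C, t • y ∈ C)
    (F : P → X → Set Y) (hFne : ∀ p x, (F p x).Nonempty)
    (hFconc : ∀ w₁ w₂ : P × X, ∀ t ∈ Icc (0:ℝ) 1,
      F (t • w₁ + (1 - t) • w₂).1 (t • w₁ + (1 - t) • w₂).2 ⊆
        t • F w₁.1 w₁.2 + (1 - t) • F w₂.1 w₂.2 + C) :
    ∀ w₁ w₂ : P × X, ∀ t ∈ Icc (0:ℝ) 1,
      exc (F (t • w₁ + (1 - t) • w₂).1 (t • w₁ + (1 - t) • w₂).2) C ≤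
        ENNReal.ofReal t * exc (F w₁.1 w₁.2) C +
        ENNReal.ofReal (1 - t) * exc (F w₂.1 w₂.2) C :=
  merit_function_convex_of_C_concave_general C hCconv hCcone F hFne hFconc
end

section
/- Let Y be a normed vector space, C ⊆ Y a closed convex cone, S ⊆ Y a nonempty set with S ⊄ C, and r > 0. Then the excess of S + r𝔹 over C satisfies e(S + r𝔹, C) = e(S,C) + r, where 𝔹 is the closed unit ball of Y. -/
/-! The bound `≤` is the triangle inequality for the distance to `C`. For `≥`, let `s ∈ S \ C`
be at distance `d > 0` from `C`. Separating the open ball `B(s, d)` from `C` gives a functional `g`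
of norm one with `g c + d ≤ g s` on `C`; since `g` is `1`-Lipschitz, `dist(y, C) ≥ d + g (y - s)`,
so moving from `s` by `r b` with `g b` close to `1` reaches distance nearly `d + r` from `C`.
Points of `S ∩ C` contribute only `r`, which any point of `S \ C` already exceeds. -/

open Set Metric
open scoped ENNReal Pointwise

open Filter Topology

section PseudoEMetricSpace

variable {Y : Type*} [PseudoEMetricSpace Y] {A B C : Set Y}

lemma infEDist_le_exc {a : Y} (ha : a ∈ A) : infEDist a C ≤ exc A C :=
  le_iSup₂ (f := fun y _ => infEDist y C) a ha

lemma exc_le {e : ℝ≥0∞} (h : ∀ a ∈ A, infEDist a C ≤ e) : exc A C ≤ e :=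
  iSup₂_le h

lemma exc_mono_left (h : A ⊆ B) : exc A C ≤ exc B C :=
  exc_le fun _ ha => infEDist_le_exc (h ha)

end PseudoEMetricSpace

section NormedSpace

variable {Y : Type*} [NormedAddCommGroup Y]

lemma exc_add_closedBall_le (S C : Set Y) (r : ℝ) :
    exc (S + closedBall 0 r) C ≤ exc S C + ENNReal.ofReal r := by
  refine exc_le ?_
  rintro _ ⟨s, hs, b, hb, rfl⟩
  calc infEDist (s + b) C ≤ infEDist s C + edist (s + b) s := infEDist_le_infEDist_add_edist
    _ ≤ exc S C + ENNReal.ofReal r := by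
      rw [edist_dist, dist_self_add_left]
      exact add_le_add (infEDist_le_exc hs)
        (ENNReal.ofReal_le_ofReal (mem_closedBall_zero_iff.1 hb))

variable [NormedSpace ℝ Y]

lemma StrongDual.exists_norm_lt_one_lt_apply (f : StrongDual ℝ Y) {a : ℝ} (ha : a < ‖f‖) :
    ∃ x : Y, ‖x‖ < 1 ∧ a < f x := by
  obtain ⟨x, hx, hax⟩ := f.exists_lt_apply_of_lt_opNorm ha
  rcases le_or_gt 0 (f x) with hfx | hfx
  · exact ⟨x, hx, by rwa [Real.norm_of_nonneg hfx] at hax⟩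
  · refine ⟨-x, by rwa [norm_neg], ?_⟩
    rwa [map_neg, ← abs_of_neg hfx, ← Real.norm_eq_abs]

lemma StrongDual.add_mul_norm_le_of_forall_mem_ball {f : StrongDual ℝ Y} {x : Y} {d u : ℝ}
    (hd : 0 < d) (hf : ∀ y ∈ ball x d, f y < u) : f x + d * ‖f‖ ≤ u := by
  by_contra! h
  obtain ⟨z, hz, hlt⟩ :=
    f.exists_norm_lt_one_lt_apply ((div_lt_iff₀' hd).2 (sub_lt_iff_lt_add'.2 h))
  have hmem : x + d • z ∈ ball x d := by
    rw [mem_ball, dist_self_add_left, norm_smul, Real.norm_of_nonneg hd.le]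
    exact mul_lt_of_lt_one_right hd hz
  have := hf _ hmem
  rw [map_add, map_smul, smul_eq_mul] at this
  rw [div_lt_iff₀' hd] at hlt
  linarith

lemma Convex.exists_norm_eq_one_add_infDist_le {C : Set Y} (hC : Convex ℝ C) {x : Y}
    (hx : 0 < infDist x C) : ∃ g : StrongDual ℝ Y, ‖g‖ = 1 ∧ ∀ c ∈ C, g c + infDist x C ≤ g x := by
  obtain ⟨f, u, hball, hCu⟩ :=
    geometric_hahn_banach_open (convex_ball x _) isOpen_ball hC disjoint_ball_infDist
  have hgap := StrongDual.add_mul_norm_le_of_forall_mem_ball hx hball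
  obtain ⟨c₀, hc₀⟩ : C.Nonempty := nonempty_iff_ne_empty.2 fun h => by simp [h] at hx
  have hf : 0 < ‖f‖ := norm_pos_iff.2 fun hf0 => by
    have hx_lt := hball x (mem_ball_self hx)
    have hc₀_ge := hCu c₀ hc₀
    simp only [hf0, zero_apply] at hx_lt hc₀_ge
    linarith
  refine ⟨-‖f‖⁻¹ • f, ?_, fun c hc => ?_⟩
  · rw [norm_smul, norm_neg, norm_inv, norm_norm, inv_mul_cancel₀ hf.ne']
  · calc (-‖f‖⁻¹ • f) c + infDist x C = -‖f‖⁻¹ * (f c - infDist x C * ‖f‖) := by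
          simp only [smul_apply, smul_eq_mul]
          field_simp
          ring
      _ ≤ -‖f‖⁻¹ * f x :=
          mul_le_mul_of_nonpos_left (by linarith [hCu c hc]) (neg_nonpos.2 (inv_nonneg.2 hf.le))
      _ = (-‖f‖⁻¹ • f) x := rfl

lemma StrongDual.sub_le_infDist {g : StrongDual ℝ Y} (hg : ‖g‖ ≤ 1) {C : Set Y} (hC : C.Nonempty)
    {t : ℝ} (hgC : ∀ c ∈ C, g c ≤ t) (y : Y) : g y - t ≤ infDist y C := by
  refine (le_infDist hC).2 fun c hc => ?_
  calc g y - t ≤ g (y - c) := by rw [map_sub]; linarith [hgC c hc]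
    _ ≤ ‖g‖ * ‖y - c‖ := (le_abs_self _).trans (g.le_opNorm _)
    _ ≤ dist y c := by rw [dist_eq_norm]; exact mul_le_of_le_one_left (norm_nonneg _) hg

lemma Convex.infEDist_add_le_exc_closedBall {C : Set Y} (hC : Convex ℝ C) (hCc : IsClosed C)
    {x : Y} (hx : x ∉ C) {r : ℝ} (hr : 0 ≤ r) :
    infEDist x C + ENNReal.ofReal r ≤ exc (closedBall x r) C := by
  rcases C.eq_empty_or_nonempty with rfl | hCne
  · simpa using infEDist_le_exc (C := (∅ : Set Y)) (mem_closedBall_self hr)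
  have hd : 0 < infDist x C := (hCc.notMem_iff_infDist_pos hCne).1 hx
  have hdist_eq : ∀ y, infEDist y C = ENNReal.ofReal (infDist y C) := fun y =>
    (ENNReal.ofReal_toReal (infEDist_ne_top hCne)).symm
  obtain ⟨g, hg1, hg⟩ := hC.exists_norm_eq_one_add_infDist_le hd
  have hbound : ∀ a < 1, ENNReal.ofReal (infDist x C + r * a) ≤ exc (closedBall x r) C := by
    intro a ha
    obtain ⟨b, hb, hab⟩ := g.exists_norm_lt_one_lt_apply (hg1.symm ▸ ha)
    have hmem : x + r • b ∈ closedBall x r := by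
      rw [mem_closedBall, dist_self_add_left, norm_smul, Real.norm_of_nonneg hr]
      exact mul_le_of_le_one_right hr hb.le
    have hdist := StrongDual.sub_le_infDist hg1.le hCne
      (fun c hc => le_sub_iff_add_le.2 (hg c hc)) (x + r • b)
    rw [map_add, map_smul, smul_eq_mul] at hdist
    calc ENNReal.ofReal (infDist x C + r * a) ≤ ENNReal.ofReal (infDist (x + r • b) C) :=
          ENNReal.ofReal_le_ofReal (by nlinarith)
      _ = infEDist (x + r • b) C := (hdist_eq _).symm
      _ ≤ exc (closedBall x r) C := infEDist_le_exc hmem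
  have hlim : Tendsto (fun a => ENNReal.ofReal (infDist x C + r * a)) (𝓝[<] 1)
      (𝓝 (infEDist x C + ENNReal.ofReal r)) := by
    rw [hdist_eq, ← ENNReal.ofReal_add hd.le hr]
    refine (ENNReal.continuous_ofReal.tendsto _).comp (Tendsto.mono_left ?_ nhdsWithin_le_nhds)
    exact (by fun_prop : Continuous fun a : ℝ => infDist x C + r * a).tendsto' 1 _ (by ring)
  exact le_of_tendsto hlim (eventually_nhdsWithin_of_forall hbound)

end NormedSpace

theorem excess_add_ball_of_not_subset_general
    {Y : Type*} [NormedAddCommGroup Y] [NormedSpace ℝ Y]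
    (C : Set Y) (hCclosed : IsClosed C) (hCconv : Convex ℝ C)
    (S : Set Y) (hSC : ¬ S ⊆ C)
    (r : ℝ) (hr : 0 < r) :
    exc (S + r • closedBall (0:Y) 1) C = exc S C + ENNReal.ofReal r := by
  rw [smul_unitClosedBall_of_nonneg hr.le]
  obtain ⟨s₀, hs₀, hs₀C⟩ := not_subset.1 hSC
  have hball : ∀ s ∈ S, s ∉ C → infEDist s C + ENNReal.ofReal r ≤ exc (S + closedBall 0 r) C :=
    fun s hs hsC => (hCconv.infEDist_add_le_exc_closedBall hCclosed hsC hr.le).trans <|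
      exc_mono_left <| singleton_add_closedBall_zero r s ▸
        add_subset_add_right (singleton_subset_iff.2 hs)
  refine le_antisymm (exc_add_closedBall_le S C r) ?_
  rw [exc, ENNReal.biSup_add ⟨s₀, hs₀⟩]
  refine iSup₂_le fun s hs => ?_
  by_cases hsC : s ∈ C
  · calc infEDist s C + ENNReal.ofReal r = ENNReal.ofReal r := by
          rw [infEDist_zero_of_mem hsC, zero_add]
      _ ≤ _ := le_add_self.trans (hball s₀ hs₀ hs₀C)
  · exact hball s hs hsC

/-- For a closed convex cone `C`, a nonempty set `S ⊄ C` and `r > 0`,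
`e(S + r𝔹, C) = e(S,C) + r`. -/
theorem excess_add_ball_of_not_subset
    {Y : Type*} [NormedAddCommGroup Y] [NormedSpace ℝ Y]
    (C : Set Y) (hCclosed : IsClosed C) (hCconv : Convex ℝ C)
    (hCcone : ∀ t : ℝ, 0 < t → ∀ y ∈ C, t • y ∈ C)
    (S : Set Y) (hSne : S.Nonempty) (hSC : ¬ S ⊆ C)
    (r : ℝ) (hr : 0 < r) :
    exc (S + r • closedBall (0:Y) 1) C = exc S C + ENNReal.ofReal r :=
  excess_add_ball_of_not_subset_general C hCclosed hCconv S hSC r hr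
end
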